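/- arXiv:1807.10113 — 5 statements merged into one kernel-verified Lean document; each statement's English description precedes it below -/
import Mathlib

section
/- For every real number c > 0 and every integer m ≥ 1, there exists a positive integer k = k(c, m) such that the following holds. If G is a finite group of order n containing a product-free subset A with |A| ≥ c·n, then there exist symmetric subsets X_m ⊆ X_{m-1} ⊆ ... ⊆ X_1 ⊆ (AA⁻¹)² of G, each containing the identity and with X_1 a proper subset of G, such that X_{i+1}² ⊆ X_i for all 1 ≤ i < m, and G is covered by at most k left-translates of X_m. -/
set_option linter.unusedSectionVars false
set_option maxHeartbeats 2000000

open Pointwise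

namespace PF

open Finset


open Finset

variable {G : Type} [Group G] [Fintype G] [DecidableEq G]

/-- convolution count: number of a ∈ A with x⁻¹ a ∈ A, i.e. |A ∩ xA| -/
def Fc (A : Finset G) (x : G) : ℕ := (A.filter fun a => x⁻¹ * a ∈ A).card

def dW (W : Finset G) (g : G) : ℕ := ((g • W) \ W).card

noncomputable def DT (A : Finset G) (t : G) : ℝ :=
  ∑ x : G, ((Fc A (t⁻¹ * x) : ℝ) - (Fc A x : ℝ))^2

lemma DT_nonneg (A : Finset G) (t : G) : 0 ≤ DT A t :=
  Finset.sum_nonneg fun _ _ => sq_nonneg _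

lemma dW_one (W : Finset G) : dW W 1 = 0 := by
  simp [dW, one_smul]

lemma card_inter_smul (W : Finset G) (g : G) :
    ((g • W) ∩ W).card + dW W g = W.card := by
  rw [dW, Finset.card_inter_add_card_sdiff, Finset.card_smul_finset]

lemma dW_inv (W : Finset G) (g : G) : dW W g⁻¹ = dW W g := by
  have h1 : (g⁻¹ • W) \ W = g⁻¹ • (W \ (g • W)) := by
    rw [Finset.smul_finset_sdiff, inv_smul_smul]
  have h2 : ((g • W) ∩ W).card + dW W g = W.card := card_inter_smul W g
  have h3 : (W ∩ (g • W)).card + (W \ (g • W)).card = W.card :=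
    Finset.card_inter_add_card_sdiff _ _
  have h4 : dW W g⁻¹ = (W \ (g • W)).card := by
    rw [dW, h1, Finset.card_smul_finset]
  rw [Finset.inter_comm] at h3
  omega

lemma dW_mul (W : Finset G) (g h : G) : dW W (g * h) ≤ dW W g + dW W h := by
  have hsub : ((g * h) • W) \ W ⊆ ((g • (h • W)) \ (g • W)) ∪ ((g • W) \ W) := by
    intro x hx
    rw [Finset.mem_sdiff] at hx
    rw [Finset.mem_union, Finset.mem_sdiff, Finset.mem_sdiff]
    by_cases hgx : x ∈ g • W
    · exact Or.inr ⟨hgx, hx.2⟩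
    · exact Or.inl ⟨by rw [← mul_smul]; exact hx.1, hgx⟩
  calc dW W (g * h) ≤ ((g • (h • W)) \ (g • W)).card + ((g • W) \ W).card := by
        exact le_trans (Finset.card_le_card hsub) (Finset.card_union_le _ _)
    _ = dW W h + dW W g := by
        rw [← Finset.smul_finset_sdiff, Finset.card_smul_finset]; rfl
    _ = dW W g + dW W h := by ring


open Finset


lemma filter_smul_eq (W : Finset G) (x : G) :
    (Finset.univ.filter fun g : G => x ∈ g • W) = x • W⁻¹ := by
  ext g
  simp only [Finset.mem_filter, Finset.mem_univ, true_and]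
  rw [Finset.mem_smul_finset, Finset.mem_smul_finset]
  constructor
  · rintro ⟨w, hw, hgw⟩
    exact ⟨w⁻¹, Finset.inv_mem_inv hw, by rw [smul_eq_mul] at hgw ⊢; rw [← hgw]; group⟩
  · rintro ⟨y, hy, hxy⟩
    rw [Finset.mem_inv] at hy
    obtain ⟨w, hw, rfl⟩ := hy
    exact ⟨w, hw, by rw [smul_eq_mul] at hxy ⊢; rw [← hxy]; group⟩

lemma sum_inter_card (W : Finset G) : ∑ g : G, ((g • W) ∩ W).card = W.card ^ 2 := by
  have h1 : ∀ g : G, ((g • W) ∩ W).card = ∑ x ∈ W, if x ∈ g • W then 1 else 0 := by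
    intro g
    rw [Finset.inter_comm, ← Finset.filter_mem_eq_inter, Finset.card_filter]
  calc ∑ g : G, ((g • W) ∩ W).card
      = ∑ g : G, ∑ x ∈ W, if x ∈ g • W then 1 else 0 := by simp_rw [h1]
    _ = ∑ x ∈ W, ∑ g : G, if x ∈ g • W then 1 else 0 := Finset.sum_comm
    _ = ∑ x ∈ W, (Finset.univ.filter fun g : G => x ∈ g • W).card := by
        simp_rw [Finset.card_filter]
    _ = ∑ x ∈ W, W.card := by
        refine Finset.sum_congr rfl fun x _ => ?_
        rw [filter_smul_eq, Finset.card_smul_finset, Finset.card_inv]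
    _ = W.card ^ 2 := by rw [Finset.sum_const, smul_eq_mul, sq]

lemma filter_Fc_eq (A : Finset G) (a : G) :
    (Finset.univ.filter fun x : G => x⁻¹ * a ∈ A) = a • A⁻¹ := by
  ext g
  simp only [Finset.mem_filter, Finset.mem_univ, true_and]
  rw [Finset.mem_smul_finset]
  constructor
  · intro h
    exact ⟨(g⁻¹ * a)⁻¹, Finset.inv_mem_inv h, by rw [smul_eq_mul]; group⟩
  · rintro ⟨y, hy, rfl⟩
    rw [Finset.mem_inv] at hy
    obtain ⟨w, hw, rfl⟩ := hy
    rw [smul_eq_mul]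
    simpa using hw

lemma sum_Fc (A : Finset G) : ∑ x : G, Fc A x = A.card ^ 2 := by
  calc ∑ x : G, Fc A x
      = ∑ x : G, ∑ a ∈ A, if x⁻¹ * a ∈ A then 1 else 0 := by
        refine Finset.sum_congr rfl fun x _ => ?_
        rw [Fc, Finset.card_filter]
    _ = ∑ a ∈ A, ∑ x : G, if x⁻¹ * a ∈ A then 1 else 0 := Finset.sum_comm
    _ = ∑ a ∈ A, (Finset.univ.filter fun x : G => x⁻¹ * a ∈ A).card := by
        simp_rw [Finset.card_filter]
    _ = ∑ a ∈ A, A.card := by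
        refine Finset.sum_congr rfl fun a _ => ?_
        rw [filter_Fc_eq, Finset.card_smul_finset, Finset.card_inv]
    _ = A.card ^ 2 := by rw [Finset.sum_const, smul_eq_mul, sq]

lemma Fc_le (A : Finset G) (x : G) : Fc A x ≤ A.card := Finset.card_filter_le _ _

lemma Fc_pos_elim (A : Finset G) (x : G) (h : 0 < Fc A x) :
    ∃ a ∈ A, ∃ b ∈ A, a * b⁻¹ = x := by
  rw [Fc, Finset.card_pos] at h
  obtain ⟨a, ha⟩ := h
  rw [Finset.mem_filter] at ha
  exact ⟨a, ha.1, x⁻¹ * a, ha.2, by group⟩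




open Finset

lemma key_pi {α : Type} [DecidableEq α] (L : ℕ) (s : Finset α) (u : α → ℝ)
    (hu : ∑ a ∈ s, u a = 0) (i j : Fin L) :
    ∑ p ∈ Fintype.piFinset (fun _ : Fin L => s), u (p i) * u (p j)
      = if i = j then (s.card : ℝ)^(L-1) * ∑ a ∈ s, (u a)^2 else 0 := by
  by_cases hij : i = j
  · subst hij
    simp only [if_pos rfl]
    have hpt : ∀ p : Fin L → α, u (p i) * u (p i) = ∏ k, (if k = i then (u (p k))^2 else 1) := by
      intro p
      rw [Finset.prod_ite_eq' Finset.univ i (fun k => (u (p k))^2)]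
      simp [sq]
    calc ∑ p ∈ Fintype.piFinset (fun _ : Fin L => s), u (p i) * u (p i)
        = ∑ p ∈ Fintype.piFinset (fun _ : Fin L => s), ∏ k, (if k = i then (u (p k))^2 else 1) :=
          Finset.sum_congr rfl fun p _ => hpt p
      _ = ∏ k : Fin L, ∑ a ∈ s, (if k = i then (u a)^2 else 1) :=
          Finset.sum_prod_piFinset s (fun k a => if k = i then (u a)^2 else 1)
      _ = (s.card : ℝ)^(L-1) * ∑ a ∈ s, (u a)^2 := by
          have h1 : ∀ k : Fin L, (∑ a ∈ s, (if k = i then (u a)^2 else 1))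
              = if k = i then (∑ a ∈ s, (u a)^2) else (s.card : ℝ) := by
            intro k; by_cases h : k = i <;> simp [h]
          simp_rw [h1]
          rw [← Finset.mul_prod_erase Finset.univ _ (Finset.mem_univ i), if_pos rfl]
          have h2 : ∏ k ∈ Finset.univ.erase i, (if k = i then (∑ a ∈ s, (u a)^2) else (s.card : ℝ))
              = (s.card : ℝ)^(L-1) := by
            rw [Finset.prod_congr rfl (fun k hk => if_neg (Finset.ne_of_mem_erase hk)),
              Finset.prod_const, Finset.card_erase_of_mem (Finset.mem_univ i)]
            simp
          rw [h2]; ring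
  · simp only [if_neg hij]
    have hpt : ∀ p : Fin L → α, u (p i) * u (p j)
        = ∏ k, (if k = i then u (p k) else if k = j then u (p k) else 1) := by
      intro p
      rw [← Finset.mul_prod_erase Finset.univ _ (Finset.mem_univ i), if_pos rfl]
      have hj : j ∈ Finset.univ.erase i := Finset.mem_erase.2 ⟨fun h => hij h.symm, Finset.mem_univ j⟩
      rw [← Finset.mul_prod_erase _ _ hj, if_neg (fun h => hij h.symm), if_pos rfl]
      have : ∏ k ∈ (Finset.univ.erase i).erase j,
          (if k = i then u (p k) else if k = j then u (p k) else 1) = 1 := by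
        refine Finset.prod_eq_one fun k hk => ?_
        have hk1 := Finset.ne_of_mem_erase hk
        have hk2 := Finset.ne_of_mem_erase (Finset.mem_of_mem_erase hk)
        rw [if_neg hk2, if_neg hk1]
      rw [this]; ring
    calc ∑ p ∈ Fintype.piFinset (fun _ : Fin L => s), u (p i) * u (p j)
        = ∑ p ∈ Fintype.piFinset (fun _ : Fin L => s),
            ∏ k, (if k = i then u (p k) else if k = j then u (p k) else 1) :=
          Finset.sum_congr rfl fun p _ => hpt p
      _ = ∏ k : Fin L, ∑ a ∈ s, (if k = i then u a else if k = j then u a else 1) :=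
          Finset.sum_prod_piFinset s (fun k a => if k = i then u a else if k = j then u a else 1)
      _ = 0 := by
          refine Finset.prod_eq_zero (Finset.mem_univ i) ?_
          simp [hu]

lemma sum_pi_sq {α : Type} [DecidableEq α] (L : ℕ) (s : Finset α) (u : α → ℝ)
    (hu : ∑ a ∈ s, u a = 0) :
    ∑ p ∈ Fintype.piFinset (fun _ : Fin L => s), (∑ i, u (p i))^2
      = (L : ℝ) * (s.card : ℝ)^(L-1) * ∑ a ∈ s, (u a)^2 := by
  have hexp : ∀ p : Fin L → α, (∑ i, u (p i))^2 = ∑ i : Fin L, ∑ j : Fin L, u (p i) * u (p j) := by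
    intro p; rw [sq, Finset.sum_mul_sum]
  calc ∑ p ∈ Fintype.piFinset (fun _ : Fin L => s), (∑ i, u (p i))^2
      = ∑ p ∈ Fintype.piFinset (fun _ : Fin L => s), ∑ i : Fin L, ∑ j : Fin L, u (p i) * u (p j) :=
        Finset.sum_congr rfl fun p _ => hexp p
    _ = ∑ i : Fin L, ∑ p ∈ Fintype.piFinset (fun _ : Fin L => s), ∑ j : Fin L, u (p i) * u (p j) :=
        Finset.sum_comm
    _ = ∑ i : Fin L, ∑ j : Fin L, ∑ p ∈ Fintype.piFinset (fun _ : Fin L => s), u (p i) * u (p j) := by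
        exact Finset.sum_congr rfl fun i _ => Finset.sum_comm
    _ = ∑ i : Fin L, ∑ j : Fin L,
          (if i = j then (s.card : ℝ)^(L-1) * ∑ a ∈ s, (u a)^2 else 0) := by
        exact Finset.sum_congr rfl fun i _ => Finset.sum_congr rfl fun j _ => key_pi L s u hu i j
    _ = ∑ _i : Fin L, (s.card : ℝ)^(L-1) * ∑ a ∈ s, (u a)^2 := by
        refine Finset.sum_congr rfl fun i _ => ?_
        rw [Finset.sum_ite_eq Finset.univ i (fun _ => (s.card : ℝ)^(L-1) * ∑ a ∈ s, (u a)^2)]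
        simp
    _ = (L : ℝ) * (s.card : ℝ)^(L-1) * ∑ a ∈ s, (u a)^2 := by
        rw [Finset.sum_const, Finset.card_univ, Fintype.card_fin, nsmul_eq_mul]; ring



attribute [local instance] Classical.propDecidable

noncomputable def gfun (A : Finset G) (L : ℕ) (p : Fin L → G) (x : G) : ℝ :=
  ((A.card : ℝ) / L) * ((Finset.univ.filter fun i : Fin L => x⁻¹ * p i ∈ A).card : ℝ)

noncomputable def errT (A : Finset G) (L : ℕ) (p : Fin L → G) : ℝ :=
  ∑ x : G, (gfun A L p x - (Fc A x : ℝ))^2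

lemma errT_nonneg (A : Finset G) (L : ℕ) (p : Fin L → G) : 0 ≤ errT A L p :=
  Finset.sum_nonneg fun _ _ => sq_nonneg _

lemma sum_errT_le (A : Finset G) (hA : 0 < A.card) (L : ℕ) (hL : 1 ≤ L) :
    ∑ p ∈ Fintype.piFinset (fun _ : Fin L => A), errT A L p
      ≤ (A.card : ℝ)^(L+3)/L := by
  have haR : (0:ℝ) < (A.card : ℝ) := by exact_mod_cast hA
  have hLR : (0:ℝ) < (L : ℝ) := by exact_mod_cast hL
  have hx : ∀ x : G, ∑ p ∈ Fintype.piFinset (fun _ : Fin L => A),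
      (gfun A L p x - (Fc A x : ℝ))^2 ≤ ((A.card : ℝ)^(L+1)/L) * (Fc A x : ℝ) := by
    intro x
    set a : ℝ := (A.card : ℝ) with ha
    set q : ℝ := (Fc A x : ℝ)/a with hq
    set u : G → ℝ := fun b => (if x⁻¹ * b ∈ A then (1:ℝ) else 0) - q with hudef
    have haq : a * q = (Fc A x : ℝ) := by
      rw [hq]; field_simp
    have hqnn : 0 ≤ q := by positivity
    have hu : ∑ b ∈ A, u b = 0 := by
      rw [hudef]
      rw [Finset.sum_sub_distrib, Finset.sum_boole, Finset.sum_const, nsmul_eq_mul]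
      have : (A.filter fun b => x⁻¹ * b ∈ A).card = Fc A x := rfl
      rw [this, ← haq]
      ring
    have hu2 : ∑ b ∈ A, (u b)^2 ≤ (Fc A x : ℝ) := by
      have hpt : ∀ b, (u b)^2
          = (if x⁻¹ * b ∈ A then (1:ℝ) else 0) - 2*q*(if x⁻¹ * b ∈ A then (1:ℝ) else 0) + q^2 := by
        intro b
        by_cases h : x⁻¹ * b ∈ A <;> simp [hudef, h] <;> ring
      rw [Finset.sum_congr rfl fun b _ => hpt b]
      rw [Finset.sum_add_distrib, Finset.sum_sub_distrib, Finset.sum_boole, ← Finset.mul_sum,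
        Finset.sum_boole, Finset.sum_const, nsmul_eq_mul]
      have hfc : ((A.filter fun b => x⁻¹ * b ∈ A).card : ℝ) = (Fc A x : ℝ) := rfl
      rw [hfc]
      have hfq : (A.card : ℝ) * q^2 = (Fc A x : ℝ) * q := by
        rw [← ha, sq, ← mul_assoc, haq]
      rw [hfq]
      have hFnn : (0:ℝ) ≤ (Fc A x : ℝ) := by positivity
      nlinarith [mul_nonneg hFnn hqnn]
    have hgf : ∀ p : Fin L → G, gfun A L p x - (Fc A x : ℝ) = (a/L) * ∑ i, u (p i) := by
      intro p
      rw [hudef]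
      rw [Finset.sum_sub_distrib, Finset.sum_boole, Finset.sum_const, nsmul_eq_mul]
      rw [Finset.card_univ, Fintype.card_fin]
      rw [gfun, ← ha, ← haq]
      field_simp
    calc ∑ p ∈ Fintype.piFinset (fun _ : Fin L => A), (gfun A L p x - (Fc A x : ℝ))^2
        = ∑ p ∈ Fintype.piFinset (fun _ : Fin L => A), (a/L)^2 * (∑ i, u (p i))^2 := by
          refine Finset.sum_congr rfl fun p _ => ?_
          rw [hgf p, mul_pow]
      _ = (a/L)^2 * ((L : ℝ) * a^(L-1) * ∑ b ∈ A, (u b)^2) := by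
          rw [← Finset.mul_sum, sum_pi_sq L A u hu, ← ha]
      _ ≤ (a/L)^2 * ((L : ℝ) * a^(L-1) * (Fc A x : ℝ)) := by
          have h1 : (0:ℝ) ≤ (a/L)^2 := sq_nonneg _
          have h2 : (0:ℝ) ≤ (L : ℝ) * a^(L-1) := by positivity
          exact mul_le_mul_of_nonneg_left (mul_le_mul_of_nonneg_left hu2 h2) h1
      _ = (a^(L+1)/L) * (Fc A x : ℝ) := by
          have hpow : a^2 * a^(L-1) = a^(L+1) := by
            rw [← pow_add]
            congr 1
            omega
          field_simp
          rw [← hpow]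
          ring
  calc ∑ p ∈ Fintype.piFinset (fun _ : Fin L => A), errT A L p
      = ∑ x : G, ∑ p ∈ Fintype.piFinset (fun _ : Fin L => A),
          (gfun A L p x - (Fc A x : ℝ))^2 := by
        rw [Finset.sum_comm]
        rfl
    _ ≤ ∑ x : G, ((A.card : ℝ)^(L+1)/L) * (Fc A x : ℝ) :=
        Finset.sum_le_sum fun x _ => hx x
    _ = ((A.card : ℝ)^(L+1)/L) * ∑ x : G, (Fc A x : ℝ) := by rw [Finset.mul_sum]
    _ = (A.card : ℝ)^(L+3)/L := by
        have : ∑ x : G, ((Fc A x : ℕ) : ℝ) = ((A.card : ℝ))^2 := by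
          rw [← Nat.cast_sum]
          rw [sum_Fc A]
          push_cast
          try ring
        rw [this]
        rw [div_mul_eq_mul_div]
        congr 1
        rw [← pow_add]

lemma exists_T (A : Finset G) (hA : 0 < A.card) (L : ℕ) (hL : 1 ≤ L) :
    ∃ T : Finset G,
      (A.card : ℝ)^L ≤ 2 * ((Fintype.card G : ℝ))^(L-1) * T.card ∧
      ∀ t ∈ T, DT A t ≤ 8 * (A.card : ℝ)^3 / L := by
  haveI : NeZero L := ⟨by omega⟩
  have haR : (0:ℝ) < (A.card : ℝ) := by exact_mod_cast hA
  have hLR : (0:ℝ) < (L : ℝ) := by exact_mod_cast hL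
  set V : Finset (Fin L → G) := Fintype.piFinset (fun _ : Fin L => A) with hV
  set bnd : ℝ := 2 * (A.card : ℝ)^3 / L with hbnd
  have hbnd_pos : 0 < bnd := by positivity
  set GG : Finset (Fin L → G) := V.filter (fun p => errT A L p ≤ bnd) with hGG
  have hVcard : V.card = A.card ^ L := by
    rw [hV]
    exact Fintype.card_piFinset_const A L
  -- Markov bound
  have hGGcard : (A.card : ℝ)^L ≤ 2 * GG.card := by
    set bad : Finset (Fin L → G) := V.filter (fun p => ¬ (errT A L p ≤ bnd)) with hbad
    have hsplit : GG.card + bad.card = V.card := by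
      rw [hGG, hbad]
      exact Finset.card_filter_add_card_filter_not _
    have hsum1 : (bad.card : ℝ) * bnd ≤ ∑ p ∈ bad, errT A L p := by
      have := Finset.card_nsmul_le_sum bad (errT A L) bnd
        (fun p hp => le_of_lt (lt_of_not_ge (Finset.mem_filter.1 hp).2))
      rwa [nsmul_eq_mul] at this
    have hsum2 : ∑ p ∈ bad, errT A L p ≤ ∑ p ∈ V, errT A L p := by
      refine Finset.sum_le_sum_of_subset_of_nonneg (Finset.filter_subset _ _) ?_
      intro p _ _; exact errT_nonneg A L p
    have hbig : (bad.card : ℝ) * bnd ≤ (A.card : ℝ)^(L+3)/L :=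
      le_trans (le_trans hsum1 hsum2) (sum_errT_le A hA L hL)
    have hbadle : (bad.card : ℝ) ≤ (A.card : ℝ)^L / 2 := by
      rw [hbnd] at hbig
      have h4 : (bad.card:ℝ) * (2*(A.card:ℝ)^3) / L ≤ ((A.card:ℝ)^L * (A.card:ℝ)^3) / L := by
        calc (bad.card:ℝ) * (2*(A.card:ℝ)^3)/L
            = (bad.card:ℝ) * (2*(A.card:ℝ)^3/L) := by ring
          _ ≤ (A.card:ℝ)^(L+3)/L := hbig
          _ = ((A.card:ℝ)^L * (A.card:ℝ)^3)/L := by rw [← pow_add]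
      have h5 := (div_le_div_iff_of_pos_right hLR).1 h4
      nlinarith [pow_pos haR 3, pow_pos haR L]
    have hVR : ((V.card : ℝ)) = (A.card : ℝ)^L := by rw [hVcard]; push_cast; ring
    have : (GG.card : ℝ) + (bad.card : ℝ) = (A.card : ℝ)^L := by
      rw [← hVR]; exact_mod_cast congrArg (fun x : ℕ => (x : ℝ)) hsplit
    linarith
  -- the orbit-invariant map
  set ψ : (Fin L → G) → (Fin L → G) := fun p => fun i => (p 0)⁻¹ * p i with hψ
  set I : Finset (Fin L → G) := GG.image ψ with hI
  have hIcard : (I.card : ℝ) ≤ (Fintype.card G : ℝ)^(L-1) := by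
    have hsub : I ⊆ Fintype.piFinset
        (fun i : Fin L => if i = 0 then ({1} : Finset G) else Finset.univ) := by
      intro v hv
      rw [hI, Finset.mem_image] at hv
      obtain ⟨p, _, rfl⟩ := hv
      rw [Fintype.mem_piFinset]
      intro i
      by_cases h : i = 0
      · subst h; simp [hψ]
      · simp [h]
    have hc : (Fintype.piFinset
        (fun i : Fin L => if i = 0 then ({1} : Finset G) else Finset.univ)).card
        = (Fintype.card G)^(L-1) := by
      rw [Fintype.card_piFinset]
      rw [← Finset.mul_prod_erase Finset.univ _ (Finset.mem_univ (0 : Fin L))]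
      rw [if_pos rfl, Finset.card_singleton, one_mul]
      rw [Finset.prod_congr rfl (fun k hk => by
        rw [if_neg (Finset.ne_of_mem_erase hk)])]
      rw [Finset.prod_const, Finset.card_erase_of_mem (Finset.mem_univ _)]
      simp
    have := le_trans (Finset.card_le_card hsub) (le_of_eq hc)
    exact_mod_cast this
  -- fibers and Cauchy-Schwarz
  have hfib : GG.card = ∑ v ∈ I, (GG.filter fun p => ψ p = v).card :=
    Finset.card_eq_sum_card_fiberwise (fun p hp => Finset.mem_image_of_mem ψ hp)
  set P : Finset ((Fin L → G) × (Fin L → G)) :=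
    (GG ×ˢ GG).filter (fun pr => ψ pr.1 = ψ pr.2) with hP
  have hPcard : ∑ v ∈ I, ((GG.filter fun p => ψ p = v).card)^2 = P.card := by
    have h1 : P.card = ∑ v ∈ I, (P.filter fun pr => ψ pr.1 = v).card :=
      Finset.card_eq_sum_card_fiberwise (fun pr hpr => by
        rw [Finset.mem_coe, Finset.mem_filter, Finset.mem_product] at hpr
        exact Finset.mem_image_of_mem ψ hpr.1.1)
    rw [h1]
    refine Finset.sum_congr rfl fun v _ => ?_
    have h2 : P.filter (fun pr => ψ pr.1 = v)
        = (GG.filter fun p => ψ p = v) ×ˢ (GG.filter fun p => ψ p = v) := by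
      ext pr
      rw [hP]
      simp only [Finset.mem_filter, Finset.mem_product]
      constructor
      · rintro ⟨⟨⟨h1', h2'⟩, h3⟩, h4⟩
        exact ⟨⟨h1', h4⟩, ⟨h2', by rw [← h3]; exact h4⟩⟩
      · rintro ⟨⟨h1', h2'⟩, ⟨h3, h4⟩⟩
        exact ⟨⟨⟨h1', h3⟩, by rw [h2', h4]⟩, h2'⟩
    rw [h2, Finset.card_product, sq]
  have hCS : (GG.card : ℝ)^2 ≤ (I.card : ℝ) * (P.card : ℝ) := by
    have := sq_sum_le_card_mul_sum_sq (α := ℝ) (s := I)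
      (f := fun v => ((GG.filter fun p => ψ p = v).card : ℝ))
    rw [← hPcard]
    push_cast
    calc ((GG.card : ℕ) : ℝ)^2
        = (∑ v ∈ I, ((GG.filter fun p => ψ p = v).card : ℝ))^2 := by
          rw [← Nat.cast_sum, ← hfib]
      _ ≤ (I.card : ℝ) * ∑ v ∈ I, ((GG.filter fun p => ψ p = v).card : ℝ)^2 := by
          exact_mod_cast this
      _ = (I.card : ℝ) * ∑ v ∈ I, (((GG.filter fun p => ψ p = v).card : ℕ) : ℝ)^2 := by norm_num
  -- the translation map
  set φ : (Fin L → G) × (Fin L → G) → G := fun pr => pr.2 0 * (pr.1 0)⁻¹ with hφ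
  have hdet : ∀ pr ∈ P, ∀ i, pr.2 i = φ pr * pr.1 i := by
    intro pr hpr i
    rw [hP, Finset.mem_filter] at hpr
    have := congrFun hpr.2 i
    simp only [hψ] at this
    rw [hφ]
    rw [mul_assoc]
    rw [this]
    group
  set T : Finset G := P.image φ with hT
  have hPT : P.card ≤ GG.card * T.card := by
    refine Finset.card_le_mul_card_image P GG.card ?_
    intro t ht
    refine Finset.card_le_card_of_injOn Prod.fst ?_ ?_
    · intro pr hpr
      rw [Finset.mem_coe, Finset.mem_filter] at hpr
      have h := hpr.1
      rw [hP, Finset.mem_filter, Finset.mem_product] at h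
      exact h.1.1
    · intro pr1 h1 pr2 h2 heq
      rw [Finset.mem_coe, Finset.mem_filter] at h1 h2
      have e1 : ∀ i, pr1.2 i = φ pr1 * pr1.1 i := hdet pr1 h1.1
      have e2 : ∀ i, pr2.2 i = φ pr2 * pr2.1 i := hdet pr2 h2.1
      have : pr1.2 = pr2.2 := by
        funext i
        rw [e1 i, e2 i, h1.2, h2.2, heq]
      exact Prod.ext heq this
  refine ⟨T, ?_, ?_⟩
  · -- size bound
    have hGGpos : (0:ℝ) < GG.card := by
      have := pow_pos haR L
      linarith
    have h1 : (GG.card : ℝ) ≤ (Fintype.card G : ℝ)^(L-1) * T.card := by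
      have hPR : (P.card : ℝ) ≤ (GG.card : ℝ) * T.card := by exact_mod_cast hPT
      have h2 : (GG.card : ℝ)^2 ≤ (I.card : ℝ) * ((GG.card : ℝ) * T.card) := by
        calc (GG.card : ℝ)^2 ≤ (I.card : ℝ) * (P.card : ℝ) := hCS
          _ ≤ (I.card : ℝ) * ((GG.card : ℝ) * T.card) := by
              refine mul_le_mul_of_nonneg_left hPR ?_
              positivity
      have h3 : (GG.card : ℝ)^2 ≤ ((Fintype.card G : ℝ)^(L-1) * T.card) * (GG.card : ℝ) := by
        calc (GG.card : ℝ)^2 ≤ (I.card : ℝ) * ((GG.card : ℝ) * T.card) := h2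
          _ ≤ ((Fintype.card G : ℝ)^(L-1)) * ((GG.card : ℝ) * T.card) := by
              refine mul_le_mul_of_nonneg_right hIcard ?_
              positivity
          _ = ((Fintype.card G : ℝ)^(L-1) * T.card) * (GG.card : ℝ) := by ring
      have h4 : (GG.card : ℝ) * (GG.card : ℝ)
          ≤ ((Fintype.card G : ℝ)^(L-1) * T.card) * GG.card := by
        rw [← sq]; exact h3
      exact le_of_mul_le_mul_right h4 hGGpos
    calc (A.card : ℝ)^L ≤ 2 * GG.card := hGGcard
      _ ≤ 2 * ((Fintype.card G : ℝ)^(L-1) * T.card) := by linarith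
      _ = 2 * (Fintype.card G : ℝ)^(L-1) * T.card := by ring
  · -- almost-period property
    intro t ht
    rw [hT, Finset.mem_image] at ht
    obtain ⟨pr, hpr, rfl⟩ := ht
    have hprP := hpr
    rw [hP, Finset.mem_filter, Finset.mem_product] at hprP
    obtain ⟨⟨haGG, hbGG⟩, hψeq⟩ := hprP
    rw [hGG, Finset.mem_filter] at haGG hbGG
    have herra : errT A L pr.1 ≤ bnd := haGG.2
    have herrb : errT A L pr.2 ≤ bnd := hbGG.2
    have hb : ∀ i, pr.2 i = φ pr * pr.1 i := hdet pr hpr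
    set t := φ pr
    have hgg : ∀ x : G, gfun A L pr.2 x = gfun A L pr.1 (t⁻¹ * x) := by
      intro x
      have hcnt : (Finset.univ.filter fun i : Fin L => x⁻¹ * pr.2 i ∈ A)
          = (Finset.univ.filter fun i : Fin L => (t⁻¹ * x)⁻¹ * pr.1 i ∈ A) := by
        refine Finset.filter_congr fun i _ => ?_
        have h9 : x⁻¹ * pr.2 i = (t⁻¹ * x)⁻¹ * pr.1 i := by
          rw [hb i]; group
        rw [h9]
      rw [gfun, gfun, hcnt]
    have hpt : ∀ x : G, ((Fc A (t⁻¹ * x) : ℝ) - (Fc A x : ℝ))^2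
        ≤ 2 * ((Fc A (t⁻¹*x) : ℝ) - gfun A L pr.1 (t⁻¹*x))^2
          + 2 * (gfun A L pr.2 x - (Fc A x : ℝ))^2 := by
      intro x
      rw [hgg x]
      nlinarith [sq_nonneg (((Fc A (t⁻¹*x) : ℝ) - gfun A L pr.1 (t⁻¹*x))
        + (gfun A L pr.1 (t⁻¹*x) - (Fc A x : ℝ))),
        sq_nonneg (((Fc A (t⁻¹*x) : ℝ) - gfun A L pr.1 (t⁻¹*x))
        - (gfun A L pr.1 (t⁻¹*x) - (Fc A x : ℝ)))]
    have hre : ∑ x : G, ((Fc A (t⁻¹*x) : ℝ) - gfun A L pr.1 (t⁻¹*x))^2 = errT A L pr.1 := by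
      rw [errT]
      refine Fintype.sum_equiv (Equiv.mulLeft t⁻¹) _ _ ?_
      intro x
      have : ((Fc A (t⁻¹*x) : ℝ) - gfun A L pr.1 (t⁻¹*x))^2
          = (gfun A L pr.1 (t⁻¹*x) - (Fc A (t⁻¹*x) : ℝ))^2 := by ring
      rw [this]
      rfl
    calc DT A t = ∑ x : G, ((Fc A (t⁻¹ * x) : ℝ) - (Fc A x : ℝ))^2 := rfl
      _ ≤ ∑ x : G, (2 * ((Fc A (t⁻¹*x) : ℝ) - gfun A L pr.1 (t⁻¹*x))^2
          + 2 * (gfun A L pr.2 x - (Fc A x : ℝ))^2) := Finset.sum_le_sum fun x _ => hpt x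
      _ = 2 * (∑ x : G, ((Fc A (t⁻¹*x) : ℝ) - gfun A L pr.1 (t⁻¹*x))^2)
          + 2 * errT A L pr.2 := by
          rw [Finset.sum_add_distrib, ← Finset.mul_sum, ← Finset.mul_sum, errT]
      _ = 2 * errT A L pr.1 + 2 * errT A L pr.2 := by rw [hre]
      _ ≤ 2 * bnd + 2 * bnd := by linarith
      _ = 8 * (A.card : ℝ)^3 / L := by rw [hbnd]; ring

lemma mem_smul_iff (W : Finset G) (t x : G) : x ∈ t • W ↔ t⁻¹ * x ∈ W := by
  rw [Finset.mem_smul_finset]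
  constructor
  · rintro ⟨w, hw, rfl⟩
    simpa using hw
  · intro h
    exact ⟨t⁻¹ * x, h, by simp⟩

lemma exists_W (A : Finset G) (hA : 0 < A.card) (R : ℕ) (hR : 1 ≤ R) :
    ∃ W : Finset G,
      (∀ x ∈ W, 0 < Fc A x) ∧
      (A.card : ℝ)/2 ≤ (W.card : ℝ) ∧
      ∀ t : G, (dW W t : ℝ) ≤ (Fintype.card G : ℝ)/R
        + DT A t * (4 * (Fintype.card G : ℝ) * R / (A.card:ℝ)^2)^2 := by
  have haR : (0:ℝ) < (A.card : ℝ) := by exact_mod_cast hA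
  have hn : 0 < Fintype.card G := Fintype.card_pos
  have hnR : (0:ℝ) < (Fintype.card G : ℝ) := by exact_mod_cast hn
  have hRR : (0:ℝ) < (R : ℝ) := by exact_mod_cast hR
  set n : ℝ := (Fintype.card G : ℝ) with hnd
  set a : ℝ := (A.card : ℝ) with had
  set q0 : ℝ := a^2/(4*n) with hq0
  have hq0pos : 0 < q0 := by rw [hq0]; positivity
  set sR : ℝ := q0/R with hsRd
  have hsRpos : 0 < sR := by rw [hsRd]; positivity
  have harg : ∀ r : ℕ, (0:ℝ) ≤ q0 + r * sR := by
    intro r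
    have : (0:ℝ) ≤ (r:ℝ) * sR := by positivity
    linarith
  set lamN : ℕ → ℕ := fun r => ⌈q0 + r * sR⌉₊ with hlamN
  have hlam_le : ∀ r : ℕ, q0 + r * sR ≤ (lamN r : ℝ) := fun r => Nat.le_ceil _
  have hlam_lt : ∀ r : ℕ, (lamN r : ℝ) < q0 + r * sR + 1 := by
    intro r
    exact Nat.ceil_lt_add_one (harg r)
  have hlam_mono : ∀ r1 r2 : ℕ, r1 ≤ r2 → lamN r1 ≤ lamN r2 := by
    intro r1 r2 h12
    refine Nat.ceil_le_ceil ?_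
    have : (r1 : ℝ) ≤ (r2 : ℝ) := by exact_mod_cast h12
    nlinarith
  set Wlev : ℕ → Finset G :=
    fun r => Finset.univ.filter (fun x => lamN r ≤ Fc A x) with hWlev
  have hchain : ∀ r1 r2 : ℕ, r1 ≤ r2 → Wlev r2 ⊆ Wlev r1 := by
    intro r1 r2 h12 x hx
    rw [hWlev, Finset.mem_filter] at hx ⊢
    exact ⟨hx.1, le_trans (hlam_mono r1 r2 h12) hx.2⟩
  have hsumFc : ∑ x : G, (Fc A x : ℝ) = a^2 := by
    rw [← Nat.cast_sum, sum_Fc A, had]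
    push_cast
    ring
  have hRs : (R : ℝ) * sR = q0 := by
    rw [hsRd]
    field_simp
  have hlow : a/2 ≤ ((Wlev R).card : ℝ) := by
    have hsplit : ∑ x : G, (Fc A x : ℝ)
        = ∑ x ∈ Wlev R, (Fc A x : ℝ)
          + ∑ x ∈ Finset.univ.filter (fun x => ¬ (lamN R ≤ Fc A x)), (Fc A x : ℝ) := by
      rw [hWlev]
      exact (Finset.sum_filter_add_sum_filter_not Finset.univ _ _).symm
    have h1 : ∑ x ∈ Wlev R, (Fc A x : ℝ) ≤ ((Wlev R).card : ℝ) * a := by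
      have hb : ∀ x ∈ Wlev R, (Fc A x : ℝ) ≤ a := by
        intro x _
        rw [had]
        exact_mod_cast Fc_le A x
      have := Finset.sum_le_card_nsmul (Wlev R) (fun x => (Fc A x : ℝ)) a hb
      rwa [nsmul_eq_mul] at this
    have h2 : ∑ x ∈ Finset.univ.filter (fun x => ¬ (lamN R ≤ Fc A x)), (Fc A x : ℝ)
        ≤ n * (2 * q0) := by
      have hb : ∀ x ∈ Finset.univ.filter (fun x => ¬ (lamN R ≤ Fc A x)),
          (Fc A x : ℝ) ≤ 2 * q0 := by
        intro x hx
        have hlt : Fc A x < lamN R := lt_of_not_ge (Finset.mem_filter.1 hx).2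
        have h5 : (Fc A x : ℝ) + 1 ≤ (lamN R : ℝ) := by exact_mod_cast hlt
        have h6 := hlam_lt R
        have h7 : (R:ℝ) * sR = q0 := hRs
        nlinarith
      calc ∑ x ∈ Finset.univ.filter (fun x => ¬ (lamN R ≤ Fc A x)), (Fc A x : ℝ)
          ≤ ((Finset.univ.filter (fun x => ¬ (lamN R ≤ Fc A x))).card : ℝ) * (2*q0) := by
            have := Finset.sum_le_card_nsmul
              (Finset.univ.filter (fun x => ¬ (lamN R ≤ Fc A x)))
              (fun x => (Fc A x : ℝ)) (2*q0) hb
            rwa [nsmul_eq_mul] at this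
        _ ≤ n * (2 * q0) := by
            have hcle : ((Finset.univ.filter (fun x => ¬ (lamN R ≤ Fc A x))).card : ℝ) ≤ n := by
              rw [hnd]
              exact_mod_cast Finset.card_le_card (Finset.filter_subset _ _)
            nlinarith
    have h3 : a^2 ≤ ((Wlev R).card : ℝ) * a + n * (2 * q0) := by
      have h8 := hsplit
      rw [hsumFc] at h8
      nlinarith [h1, h2]
    have h4 : n * (2 * q0) = a^2/2 := by
      rw [hq0]
      field_simp
      ring
    rw [h4] at h3
    nlinarith
  -- pigeonhole
  have hpigeon : ∃ r : ℕ, r < R ∧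
      ((Wlev r).card : ℝ) - ((Wlev (r+1)).card : ℝ) ≤ n/R := by
    by_contra hcon
    push_neg at hcon
    have hlt : ∀ r ∈ Finset.range R, n/R <
        ((Wlev r).card : ℝ) - ((Wlev (r+1)).card : ℝ) := by
      intro r hr
      exact hcon r (Finset.mem_range.1 hr)
    have hsum : ∑ r ∈ Finset.range R, (n/R)
        < ∑ r ∈ Finset.range R, (((Wlev r).card : ℝ) - ((Wlev (r+1)).card : ℝ)) := by
      refine Finset.sum_lt_sum_of_nonempty ?_ hlt
      exact Finset.nonempty_range_iff.2 (by omega)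
    rw [Finset.sum_range_sub' (fun r => ((Wlev r).card : ℝ))] at hsum
    rw [Finset.sum_const, Finset.card_range, nsmul_eq_mul] at hsum
    have he : (R:ℝ) * (n/R) = n := by field_simp
    rw [he] at hsum
    have h0 : ((Wlev 0).card : ℝ) ≤ n := by
      rw [hnd]
      exact_mod_cast Finset.card_le_univ _
    have hWR : (0:ℝ) ≤ ((Wlev R).card : ℝ) := by positivity
    linarith
  obtain ⟨r, hrR, hgap⟩ := hpigeon
  refine ⟨Wlev (r+1), ?_, ?_, ?_⟩
  · intro x hx
    rw [hWlev, Finset.mem_filter] at hx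
    have hpos : 0 < lamN (r+1) := by
      rw [hlamN]
      refine Nat.ceil_pos.2 ?_
      have : (0:ℝ) ≤ ((r+1:ℕ):ℝ) * sR := by positivity
      push_cast at this ⊢
      nlinarith
    omega
  · exact le_trans hlow (by exact_mod_cast Finset.card_le_card (hchain (r+1) R (by omega)))
  · intro t
    set W := Wlev (r+1) with hW
    have hsub : (t • W) \ W ⊆ ((t • W) \ Wlev r) ∪ (Wlev r \ W) := by
      intro x hx
      rw [Finset.mem_sdiff] at hx
      rw [Finset.mem_union, Finset.mem_sdiff, Finset.mem_sdiff]
      by_cases h : x ∈ Wlev r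
      · exact Or.inr ⟨h, hx.2⟩
      · exact Or.inl ⟨hx.1, h⟩
    have hcard1 : ((Wlev r \ W).card : ℝ) ≤ n/R := by
      rw [Finset.card_sdiff_of_subset (hchain r (r+1) (by omega))]
      have hle := Finset.card_le_card (hchain r (r+1) (by omega))
      have h9 : (((Wlev r).card - W.card : ℕ) : ℝ)
          = ((Wlev r).card : ℝ) - (W.card : ℝ) := by
        rw [Nat.cast_sub hle]
      rw [h9]
      exact hgap
    have hcard2 : (((t • W) \ Wlev r).card : ℝ) * sR^2 ≤ DT A t := by
      have hpt : ∀ x ∈ (t • W) \ Wlev r, sR^2 ≤ ((Fc A (t⁻¹ * x) : ℝ) - (Fc A x : ℝ))^2 := by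
        intro x hx
        rw [Finset.mem_sdiff] at hx
        have h1 : (lamN (r+1) : ℝ) ≤ (Fc A (t⁻¹ * x) : ℝ) := by
          have h1' := (mem_smul_iff W t x).1 hx.1
          rw [hW, hWlev, Finset.mem_filter] at h1'
          exact_mod_cast h1'.2
        have h2 : (Fc A x : ℝ) + 1 ≤ (lamN r : ℝ) := by
          have h2' := hx.2
          rw [hWlev, Finset.mem_filter] at h2'
          push_neg at h2'
          exact_mod_cast h2' (Finset.mem_univ x)
        have h6 := hlam_lt r
        have h7 := hlam_le (r+1)
        have hd : sR ≤ (Fc A (t⁻¹ * x) : ℝ) - (Fc A x : ℝ) := by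
          push_cast at h7
          nlinarith
        nlinarith [hsRpos]
      calc (((t • W) \ Wlev r).card : ℝ) * sR^2
          = ∑ _x ∈ (t • W) \ Wlev r, sR^2 := by
            rw [Finset.sum_const, nsmul_eq_mul]
        _ ≤ ∑ x ∈ (t • W) \ Wlev r, ((Fc A (t⁻¹ * x) : ℝ) - (Fc A x : ℝ))^2 :=
            Finset.sum_le_sum hpt
        _ ≤ ∑ x : G, ((Fc A (t⁻¹ * x) : ℝ) - (Fc A x : ℝ))^2 := by
            refine Finset.sum_le_sum_of_subset_of_nonneg (Finset.subset_univ _) ?_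
            intro x _ _
            exact sq_nonneg _
        _ = DT A t := rfl
    have hinv : 1/sR = 4 * n * R / a^2 := by
      rw [hsRd, hq0]
      field_simp
    have hcard2' : (((t • W) \ Wlev r).card : ℝ) ≤ DT A t * (4 * n * R / a^2)^2 := by
      rw [← hinv]
      have h6 : (((t • W) \ Wlev r).card : ℝ)
          = (((t • W) \ Wlev r).card : ℝ) * sR^2 * (1/sR)^2 := by
        field_simp
      rw [h6]
      have h7 : (0:ℝ) ≤ (1/sR)^2 := sq_nonneg _
      exact mul_le_mul_of_nonneg_right hcard2 h7
    calc (dW W t : ℝ) ≤ ((((t • W) \ Wlev r) ∪ (Wlev r \ W)).card : ℝ) := by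
          exact_mod_cast Finset.card_le_card hsub
      _ ≤ (((t • W) \ Wlev r).card : ℝ) + ((Wlev r \ W).card : ℝ) := by
          exact_mod_cast Finset.card_union_le _ _
      _ ≤ n/R + DT A t * (4 * n * R / a^2)^2 := by linarith

lemma properness (W : Finset G) (hW : 0 < W.card) (eps : ℝ) (heps : 0 ≤ eps)
    (h : ∀ g : G, (dW W g : ℝ) ≤ eps * W.card) :
    (1 - eps) * (Fintype.card G : ℝ) ≤ (W.card : ℝ) := by
  have hWR : (0:ℝ) < (W.card : ℝ) := by exact_mod_cast hW
  have hsum : ((W.card : ℝ))^2 = ∑ g : G, (((g • W) ∩ W).card : ℝ) := by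
    rw [← Nat.cast_sum, sum_inter_card W]
    push_cast
    ring
  have hterm : ∀ g : G, (1 - eps) * (W.card : ℝ) ≤ (((g • W) ∩ W).card : ℝ) := by
    intro g
    have h1 : ((g • W) ∩ W).card + dW W g = W.card := card_inter_smul W g
    have h2 : (((g • W) ∩ W).card : ℝ) = (W.card : ℝ) - (dW W g : ℝ) := by
      have := congrArg (fun k : ℕ => (k : ℝ)) h1
      push_cast at this
      linarith
    rw [h2]
    have := h g
    nlinarith
  have hlow : (Fintype.card G : ℝ) * ((1 - eps) * (W.card : ℝ)) ≤ ((W.card : ℝ))^2 := by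
    rw [hsum]
    have := Finset.card_nsmul_le_sum Finset.univ
      (fun g : G => (((g • W) ∩ W).card : ℝ)) ((1 - eps) * (W.card : ℝ))
      (fun g _ => hterm g)
    rwa [Finset.card_univ, nsmul_eq_mul] at this
  nlinarith [hlow, hWR]

lemma ruzsa_cover (S : Finset G) (hS : S.Nonempty) :
    ∃ T' : Finset G, T'.card * S.card ≤ Fintype.card G ∧
      ∀ g : G, ∃ t ∈ T', ∃ s1 ∈ S, ∃ s2 ∈ S, t⁻¹ * g = s2 * s1⁻¹ := by
  set C : Finset (Finset G) := Finset.univ.powerset.filter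
    (fun Q => ∀ t1 ∈ Q, ∀ t2 ∈ Q, t1 ≠ t2 → Disjoint (t1 • S) (t2 • S)) with hC
  have hCne : C.Nonempty := by
    refine ⟨∅, ?_⟩
    rw [hC, Finset.mem_filter]
    exact ⟨Finset.mem_powerset.2 (Finset.empty_subset _), fun t1 h1 => absurd h1 (by simp)⟩
  obtain ⟨T', hT'C, hmax⟩ := Finset.exists_max_image C Finset.card hCne
  have hT'disj : ∀ t1 ∈ T', ∀ t2 ∈ T', t1 ≠ t2 → Disjoint (t1 • S) (t2 • S) := by
    have := (Finset.mem_filter.1 (by rw [hC] at hT'C; exact hT'C)).2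
    exact this
  refine ⟨T', ?_, ?_⟩
  · have hdisjcard : (T'.biUnion (fun t => t • S)).card = ∑ t ∈ T', (t • S).card :=
      Finset.card_biUnion hT'disj
    have h1 : ∑ t ∈ T', (t • S).card = T'.card * S.card := by
      rw [Finset.sum_congr rfl (fun t _ => Finset.card_smul_finset t S),
        Finset.sum_const, smul_eq_mul]
    rw [← h1, ← hdisjcard]
    exact Finset.card_le_univ _
  · intro g
    by_cases hg : ∃ t ∈ T', ¬ Disjoint (g • S) (t • S)
    · obtain ⟨t, ht, hnd⟩ := hg
      rw [Finset.not_disjoint_iff] at hnd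
      obtain ⟨x, hx1, hx2⟩ := hnd
      refine ⟨t, ht, g⁻¹ * x, (mem_smul_iff S g x).1 hx1, t⁻¹ * x, (mem_smul_iff S t x).1 hx2, ?_⟩
      group
    · exfalso
      push_neg at hg
      have hgnot : g ∉ T' := by
        intro hgT
        obtain ⟨s0, hs0⟩ := hS
        have := hg g hgT
        have hmem : g • s0 ∈ g • S := Finset.smul_mem_smul_finset hs0
        exact (Finset.disjoint_left.1 this) hmem hmem
      have hins : insert g T' ∈ C := by
        rw [hC, Finset.mem_filter]
        refine ⟨Finset.mem_powerset.2 (Finset.subset_univ _), ?_⟩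
        intro t1 h1 t2 h2 h12
        rw [Finset.mem_insert] at h1 h2
        rcases h1 with rfl | h1
        · rcases h2 with rfl | h2
          · exact absurd rfl h12
          · exact hg t2 h2
        · rcases h2 with rfl | h2
          · exact (hg t1 h1).symm
          · exact hT'disj t1 h1 t2 h2 h12
      have hcard := hmax _ hins
      rw [Finset.card_insert_of_notMem hgnot] at hcard
      omega

end PF

/-- A subset `A` of a group is product-free if there are no `x, y, z ∈ A` with `x * y = z`. -/
def ProductFree {G : Type*} [Group G] (A : Set G) : Prop :=
  ∀ x ∈ A, ∀ y ∈ A, x * y ∉ A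

set_option maxHeartbeats 10000000 in
theorem stmt_0 (c : ℝ) (hc : 0 < c) (m : ℕ) (hm : 1 ≤ m) :
    ∃ k : ℕ, 0 < k ∧
      ∀ (G : Type) [Group G] [Fintype G] (A : Set G),
        ProductFree A → c * (Fintype.card G : ℝ) ≤ (A.ncard : ℝ) →
        ∃ X : ℕ → Set G,
          (∀ i, 1 ≤ i → i ≤ m → (X i)⁻¹ = X i ∧ (1 : G) ∈ X i) ∧
          (∀ i, 1 ≤ i → i < m → X (i + 1) ⊆ X i ∧ X (i + 1) * X (i + 1) ⊆ X i) ∧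
          X 1 ⊆ (A * A⁻¹) * (A * A⁻¹) ∧ X 1 ≠ Set.univ ∧
          ∃ T : Finset G, T.card ≤ k ∧
            (Set.univ : Set G) ⊆ ⋃ g ∈ T, g • X m := by
  classical
  -- constants depending only on c and m
  set ε1 : ℝ := min c 1 / 2 with hε1d
  have hmin : 0 < min c 1 := lt_min hc one_pos
  have hε1pos : 0 < ε1 := by rw [hε1d]; positivity
  have hε1c : ε1 < c := lt_of_lt_of_le (by rw [hε1d]; linarith) (min_le_left c 1)
  have hε1half : ε1 ≤ 1/2 := by
    rw [hε1d]
    have := min_le_right c 1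
    linarith
  set ε' : ℝ := ε1 / 2^m with hε'd
  have h2mpos : (0:ℝ) < 2^m := by positivity
  have hε'pos : 0 < ε' := by rw [hε'd]; positivity
  have h2m : (2:ℝ)^m = 2 * 2^(m-1) := by
    rw [← pow_succ']
    congr 1
    omega
  have h2ε' : 2 * ε' = ε1 / 2^(m-1) := by
    rw [hε'd, h2m]
    have : (0:ℝ) < 2^(m-1) := by positivity
    field_simp
  set R : ℕ := ⌈4/(ε' * c)⌉₊ with hRd
  have hRge : 4/(ε' * c) ≤ (R : ℝ) := Nat.le_ceil _
  have hR1 : 1 ≤ R := by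
    rw [hRd]
    refine Nat.one_le_ceil_iff.2 ?_
    positivity
  have hRpos : (0:ℝ) < (R:ℝ) := by exact_mod_cast hR1
  set L : ℕ := max 1 ⌈512*(R:ℝ)^2/(ε' * c^2)⌉₊ with hLd
  have hL1 : 1 ≤ L := le_max_left _ _
  have hLge : 512*(R:ℝ)^2/(ε' * c^2) ≤ (L : ℝ) := by
    refine le_trans (Nat.le_ceil _) (Nat.cast_le.2 (le_max_right _ _))
  have hLpos : (0:ℝ) < (L:ℝ) := by exact_mod_cast hL1
  set k : ℕ := max 1 ⌈2/c^L⌉₊ with hkd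
  have hkge : 2/c^L ≤ (k : ℝ) := by
    refine le_trans (Nat.le_ceil _) (Nat.cast_le.2 (le_max_right _ _))
  have hkpos : 0 < k := lt_of_lt_of_le one_pos (le_max_left _ _)
  clear_value ε1 ε' R L k
  refine ⟨k, hkpos, ?_⟩
  intro G _ _ A hPF hAcard
  -- setup
  have hAfin : A.Finite := Set.toFinite A
  set A' : Finset G := hAfin.toFinset with hA'd
  have hmemA' : ∀ x : G, x ∈ A' ↔ x ∈ A := fun x => Set.Finite.mem_toFinset hAfin
  have hncard : (A.ncard : ℝ) = (A'.card : ℝ) := by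
    rw [hA'd, Set.ncard_eq_toFinset_card A hAfin]
  rw [hncard] at hAcard
  set n : ℕ := Fintype.card G with hnd
  have hnpos : 0 < n := Fintype.card_pos
  have hnR : (0:ℝ) < (n:ℝ) := by exact_mod_cast hnpos
  set a : ℝ := (A'.card : ℝ) with had
  have hapos : (0:ℝ) < a := lt_of_lt_of_le (by positivity) hAcard
  have hA'pos : 0 < A'.card := by
    have h := hapos
    rw [had] at h
    exact_mod_cast h
  have hca : c * n ≤ a := hAcard
  have han : a ≤ (n:ℝ) := by
    rw [had, hnd]
    exact_mod_cast Finset.card_le_univ A'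
  have hPF' : ∀ x ∈ A', ∀ y ∈ A', x * y ∉ A' := by
    intro x hx y hy hxy
    exact hPF x ((hmemA' x).1 hx) y ((hmemA' y).1 hy) ((hmemA' _).1 hxy)
  -- the level set W
  obtain ⟨W, hWpos, hWbig, hWt⟩ := PF.exists_W A' hA'pos R hR1
  have hWcardR : (0:ℝ) < (W.card : ℝ) := lt_of_lt_of_le (by positivity) hWbig
  have hWcard : 0 < W.card := by exact_mod_cast hWcardR
  set w : ℝ := (W.card : ℝ) with hwd
  -- W is disjoint from A'
  have hWA : ∀ x ∈ W, x ∉ A' := by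
    intro x hxW hxA
    obtain ⟨p, hp, q, hq, hpq⟩ := PF.Fc_pos_elim A' x (hWpos x hxW)
    have : x * q = p := by rw [← hpq]; group
    exact hPF' x hxA q hq (this ▸ hp)
  -- W is inside A A⁻¹ (as a set)
  have hWB : ∀ x ∈ W, x ∈ (A * A⁻¹ : Set G) := by
    intro x hxW
    obtain ⟨p, hp, q, hq, hpq⟩ := PF.Fc_pos_elim A' x (hWpos x hxW)
    refine Set.mem_mul.2 ⟨p, (hmemA' p).1 hp, q⁻¹, ?_, hpq⟩
    rw [Set.mem_inv]
    simpa using (hmemA' q).1 hq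
  -- definition of the chain
  set X : ℕ → Set G := fun i => {g : G | (PF.dW W g : ℝ) ≤ ε1/2^(i-1) * w} with hXd
  have hXmem : ∀ i (g : G), g ∈ X i ↔ (PF.dW W g : ℝ) ≤ ε1/2^(i-1) * w := by
    intro i g
    rw [hXd]
    rfl
  -- the translate set T of almost periods
  obtain ⟨T, hTsize, hTapprox⟩ := PF.exists_T A' hA'pos L hL1
  -- the dense symmetric set S
  set S : Finset G := Finset.univ.filter (fun t => (PF.dW W t : ℝ) ≤ ε' * w) with hSd
  have hSmem : ∀ t : G, t ∈ S ↔ (PF.dW W t : ℝ) ≤ ε' * w := by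
    intro t
    rw [hSd, Finset.mem_filter]
    simp
  have hTS : T ⊆ S := by
    intro t ht
    rw [hSmem]
    have h1 := hWt t
    have h2 := hTapprox t ht
    -- numeric bound
    have hεc : (0:ℝ) < ε' * c := by positivity
    have hA4 : (4:ℝ) ≤ (R:ℝ) * (ε' * c) := by
      rw [div_le_iff₀ hεc] at hRge
      linarith
    have hb1 : (n:ℝ)/R ≤ ε' * a / 4 := by
      rw [div_le_div_iff₀ hRpos (by norm_num : (0:ℝ) < 4)]
      have e1 := mul_le_mul_of_nonneg_left hA4 hnR.le
      have e2 := mul_le_mul_of_nonneg_left hca (mul_nonneg hRpos.le hε'pos.le)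
      nlinarith [e1, e2]
    have hb2 : PF.DT A' t * (4 * (n:ℝ) * R / a^2)^2 ≤ ε' * a / 4 := by
      have hM : (0:ℝ) ≤ (4 * (n:ℝ) * R / a^2)^2 := sq_nonneg _
      have h3 : PF.DT A' t * (4 * (n:ℝ) * R / a^2)^2
          ≤ (8 * a^3 / L) * (4 * (n:ℝ) * R / a^2)^2 :=
        mul_le_mul_of_nonneg_right h2 hM
      refine le_trans h3 ?_
      have hrw : (8 * a^3 / L) * (4 * (n:ℝ) * R / a^2)^2 = 128 * n^2 * R^2 / (L * a) := by
        field_simp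
        ring
      rw [hrw]
      rw [div_le_div_iff₀ (by positivity) (by norm_num : (0:ℝ) < 4)]
      -- need 512 n² R² ≤ ε' a² L
      have h5 : 512*(R:ℝ)^2 ≤ (L:ℝ) * (ε' * c^2) := by
        rw [div_le_iff₀ (by positivity)] at hLge
        linarith
      have h6 : c^2 * (n:ℝ)^2 ≤ a^2 := by
        have h6' := pow_le_pow_left₀ (by positivity : (0:ℝ) ≤ c*(n:ℝ)) hca 2
        rw [mul_pow] at h6'
        exact h6'
      have e1 := mul_le_mul_of_nonneg_right h5 (sq_nonneg (n:ℝ))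
      have e2 := mul_le_mul_of_nonneg_left h6 (mul_nonneg hLpos.le hε'pos.le)
      nlinarith [e1, e2]
    calc (PF.dW W t : ℝ) ≤ (n:ℝ)/R + PF.DT A' t * (4 * (n:ℝ) * R / a^2)^2 := h1
      _ ≤ ε' * a / 4 + ε' * a / 4 := by linarith
      _ = ε' * a / 2 := by ring
      _ ≤ ε' * w := by nlinarith [hWbig, hε'pos]
  -- S is big
  have hTlow : c^L * n ≤ 2 * (T.card : ℝ) := by
    have h1 : (c*(n:ℝ))^L ≤ a^L := by
      refine pow_le_pow_left₀ (by positivity) hca L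
    have h2 : a^L ≤ 2 * ((n:ℝ))^(L-1) * T.card := hTsize
    have h3 : ((n:ℝ))^L = ((n:ℝ))^(L-1) * n := by
      rw [← pow_succ]
      congr 1
      omega
    have h4 : (c*(n:ℝ))^L = c^L * (n:ℝ)^L := mul_pow c _ L
    have h5 : c^L * ((n:ℝ)^(L-1) * n) ≤ 2 * ((n:ℝ))^(L-1) * T.card := by
      rw [← h3, ← h4]
      linarith
    have hnL1 : (0:ℝ) < ((n:ℝ))^(L-1) := by positivity
    have h6 : c^L * n * (n:ℝ)^(L-1) ≤ (2 * T.card) * (n:ℝ)^(L-1) := by nlinarith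
    exact le_of_mul_le_mul_right h6 hnL1
  have hScard : c^L * n / 2 ≤ (S.card : ℝ) := by
    have : (T.card : ℝ) ≤ (S.card : ℝ) := by exact_mod_cast Finset.card_le_card hTS
    linarith
  have hSne : S.Nonempty := by
    refine ⟨1, ?_⟩
    rw [hSmem]
    rw [PF.dW_one]
    have : (0:ℝ) ≤ ε' * w := by positivity
    simpa using this
  -- Ruzsa covering
  obtain ⟨T', hT'card, hT'cover⟩ := PF.ruzsa_cover S hSne
  have hT'k : T'.card ≤ k := by
    have hcLpos : (0:ℝ) < c^L := by positivity
    have h1 : (T'.card : ℝ) * (S.card : ℝ) ≤ (n:ℝ) := by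
      exact_mod_cast hT'card
    have h2 : (T'.card : ℝ) * (c^L * n / 2) ≤ (n:ℝ) := by
      refine le_trans ?_ h1
      refine mul_le_mul_of_nonneg_left hScard ?_
      positivity
    have h3 : (T'.card : ℝ) ≤ 2 / c^L := by
      rw [le_div_iff₀ hcLpos]
      have h5 : (T'.card:ℝ) * c^L * ((n:ℝ)/2) ≤ 2 * ((n:ℝ)/2) := by
        have he1 : (T'.card:ℝ) * c^L * ((n:ℝ)/2) = (T'.card:ℝ) * (c^L * (n:ℝ)/2) := by ring
        have he2 : 2 * ((n:ℝ)/2) = (n:ℝ) := by ring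
        rw [he1, he2]
        exact h2
      exact le_of_mul_le_mul_right h5 (by positivity)
    have h4 : (T'.card : ℝ) ≤ (k : ℝ) := le_trans h3 hkge
    exact_mod_cast h4
  -- assemble
  refine ⟨X, ?_, ?_, ?_, ?_, ⟨T', hT'k, ?_⟩⟩
  · -- symmetric and contains 1
    intro i _ _
    constructor
    · ext g
      rw [Set.mem_inv, hXmem, hXmem, PF.dW_inv]
    · rw [hXmem, PF.dW_one]
      have : (0:ℝ) ≤ ε1/2^(i-1) * w := by positivity
      simpa using this
  · -- chain
    intro i hi1 him
    have hexp : (i + 1) - 1 = i := by omega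
    have hpow : (2:ℝ)^i = 2 * 2^(i-1) := by
      rw [← pow_succ']
      congr 1
      omega
    constructor
    · intro g hg
      rw [hXmem] at hg ⊢
      rw [hexp] at hg
      refine le_trans hg ?_
      have h1 : (0:ℝ) < 2^(i-1) := by positivity
      have h2 : (0:ℝ) < 2^i := by positivity
      have h3 : ε1/2^i ≤ ε1/2^(i-1) := by
        refine div_le_div_of_nonneg_left hε1pos.le h1 ?_
        rw [hpow]
        nlinarith
      nlinarith [hWcardR]
    · intro z hz
      rw [Set.mem_mul] at hz
      obtain ⟨x, hx, y, hy, rfl⟩ := hz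
      rw [hXmem] at hx hy ⊢
      rw [hexp] at hx hy
      have hle := PF.dW_mul W x y
      have hleR : (PF.dW W (x*y) : ℝ) ≤ (PF.dW W x : ℝ) + (PF.dW W y : ℝ) := by
        exact_mod_cast hle
      have hpoweq : 2 * (ε1/2^i) = ε1/2^(i-1) := by
        rw [hpow]
        have : (0:ℝ) < 2^(i-1) := by positivity
        field_simp
      calc (PF.dW W (x*y) : ℝ) ≤ (PF.dW W x : ℝ) + (PF.dW W y : ℝ) := hleR
        _ ≤ ε1/2^i * w + ε1/2^i * w := by linarith
        _ = (2 * (ε1/2^i)) * w := by ring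
        _ = ε1/2^(i-1) * w := by rw [hpoweq]
  · -- X 1 ⊆ (A A⁻¹)²
    intro g hg
    rw [hXmem] at hg
    norm_num at hg
    have hlt : (PF.dW W g : ℝ) < w := by
      have : ε1 * w < 1 * w := by
        refine mul_lt_mul_of_pos_right ?_ hWcardR
        linarith
      nlinarith
    have hne : ((g • W) ∩ W).Nonempty := by
      rw [← Finset.card_pos]
      have h1 := PF.card_inter_smul W g
      have h2 : (PF.dW W g : ℝ) < (W.card : ℝ) := hlt
      have h3 : PF.dW W g < W.card := by exact_mod_cast h2
      omega
    obtain ⟨x, hx⟩ := hne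
    rw [Finset.mem_inter] at hx
    have hx1 : g⁻¹ * x ∈ W := (PF.mem_smul_iff W g x).1 hx.1
    have hx2 : x ∈ W := hx.2
    have hB1 : x ∈ (A * A⁻¹ : Set G) := hWB x hx2
    have hB2 : (g⁻¹ * x)⁻¹ ∈ (A * A⁻¹ : Set G) := by
      have := hWB _ hx1
      rw [Set.mem_mul] at this ⊢
      obtain ⟨p, hp, q, hq, hpq⟩ := this
      rw [Set.mem_inv] at hq
      refine ⟨q⁻¹, hq, p⁻¹, ?_, ?_⟩
      · rw [Set.mem_inv]
        simpa using hp
      · rw [← hpq]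
        group
    refine Set.mem_mul.2 ⟨x, hB1, (g⁻¹ * x)⁻¹, hB2, ?_⟩
    group
  · -- X 1 proper
    intro hXuniv
    have hall : ∀ g : G, (PF.dW W g : ℝ) ≤ ε1 * w := by
      intro g
      have : g ∈ X 1 := by rw [hXuniv]; trivial
      rw [hXmem] at this
      norm_num at this
      exact this
    have hprop := PF.properness W hWcard ε1 hε1pos.le hall
    have hdisj : Disjoint W A' := by
      rw [Finset.disjoint_left]
      intro x hxW hxA
      exact hWA x hxW hxA
    have hunion : W.card + A'.card ≤ n := by
      rw [← Finset.card_union_of_disjoint hdisj, hnd]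
      exact Finset.card_le_univ _
    have hunionR : w + a ≤ (n:ℝ) := by
      rw [hwd, had]
      exact_mod_cast hunion
    -- (1-ε1) n ≤ w  and  c n ≤ a  gives  (1-ε1+c) n ≤ n, i.e. c ≤ ε1
    have : c ≤ ε1 := by nlinarith [hprop, hca, hnR]
    linarith
  · -- covering
    intro y _
    obtain ⟨t, ht, s1, hs1, s2, hs2, heq⟩ := hT'cover y
    rw [hSmem] at hs1 hs2
    refine Set.mem_iUnion₂.2 ⟨t, ht, ?_⟩
    rw [Set.mem_smul_set_iff_inv_smul_mem]
    rw [smul_eq_mul, heq]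
    rw [hXmem]
    have h1 : (PF.dW W (s2 * s1⁻¹) : ℝ) ≤ (PF.dW W s2 : ℝ) + (PF.dW W s1⁻¹ : ℝ) := by
      exact_mod_cast PF.dW_mul W s2 s1⁻¹
    rw [PF.dW_inv] at h1
    calc (PF.dW W (s2 * s1⁻¹) : ℝ) ≤ (PF.dW W s2 : ℝ) + (PF.dW W s1 : ℝ) := h1
      _ ≤ ε' * w + ε' * w := by linarith
      _ = (2 * ε') * w := by ring
      _ = ε1/2^(m-1) * w := by rw [h2ε']
end

section
/- Let G be a group and let X be a subset of G such that the product set XX⁻¹X is properly contained in G. Then there exists an element g ∈ G such that the right translate X·g is product-free. -/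
open Pointwise

theorem mul_mul_eq_mul_iff_inv_eq {G : Type*} [Group G] {g x₁ x₂ x₃ : G} :
    x₁ * g * (x₂ * g) = x₃ * g ↔ g⁻¹ = x₂ * x₃⁻¹ * x₁ := by
  constructor
  · intro h
    obtain rfl : x₁ * g * x₂ = x₃ := mul_right_cancel (by rw [← h]; group)
    group
  · intro h
    rw [← inv_inv g, h]
    group

theorem productFree_mul_singleton_iff {G : Type*} [Group G] (X : Set G) (g : G) :
    ProductFree (X * {g}) ↔ g⁻¹ ∉ X * X⁻¹ * X := by
  constructor
  · rintro hpf ⟨_, ⟨x₂, hx₂, y, hy, rfl⟩, x₁, hx₁, hg⟩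
    refine hpf _ (Set.mul_mem_mul hx₁ rfl) _ (Set.mul_mem_mul hx₂ rfl)
      ⟨y⁻¹, hy, g, rfl, (mul_mul_eq_mul_iff_inv_eq.mpr ?_).symm⟩
    rw [inv_inv]
    exact hg.symm
  · rintro hg _ ⟨x₁, hx₁, _, rfl, rfl⟩ _ ⟨x₂, hx₂, _, rfl, rfl⟩ ⟨x₃, hx₃, _, rfl, h⟩
    exact hg ⟨_, ⟨x₂, hx₂, x₃⁻¹, Set.inv_mem_inv.mpr hx₃, rfl⟩, x₁, hx₁,
      (mul_mul_eq_mul_iff_inv_eq.mp h.symm).symm⟩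

theorem stmt_4 {G : Type*} [Group G] (X : Set G) (h : X * X⁻¹ * X ≠ Set.univ) :
    ∃ g : G, ProductFree (X * {g}) := by
  obtain ⟨y, hy⟩ := (Set.ne_univ_iff_exists_notMem _).mp h
  exact ⟨y⁻¹, (productFree_mul_singleton_iff X y⁻¹).mpr (by rwa [inv_inv])⟩
end

section
/- Let G be a finite group of order n and let X₃ ⊆ X₂ ⊆ X₁ be symmetric subsets of G containing the identity such that X₃² ⊆ X₂, X₂² ⊆ X₁, X₁ is properly contained in G, and G is covered by at most k left-translates of X₃. Then G contains a product-free subset of size at least n/k. -/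
open Pointwise

/-- `(g a) (g b) = g c` forces `g = a⁻¹ c b⁻¹`. -/
theorem productFree_smul_of_notMem {G : Type*} [Group G] {X : Set G} {g : G}
    (hg : g ∉ X⁻¹ * X * X⁻¹) : ProductFree (g • X) := by
  rintro _ ⟨a, ha, rfl⟩ _ ⟨b, hb, rfl⟩ ⟨c, hc, hcab⟩
  have hg_eq : g = a⁻¹ * c * b⁻¹ := by
    have : g * c = g * (a * g * b) := by simpa only [smul_eq_mul, mul_assoc] using hcab
    rw [mul_left_cancel this]
    group
  exact hg (hg_eq ▸ Set.mul_mem_mul (Set.mul_mem_mul (Set.inv_mem_inv.2 ha) hc)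
    (Set.inv_mem_inv.2 hb))

theorem natCard_le_card_mul_ncard_of_subset_iUnion_smul {G : Type*} [Group G] [Finite G]
    {X : Set G} {T : Finset G} (hcov : Set.univ ⊆ ⋃ g ∈ T, g • X) :
    Nat.card G ≤ T.card * X.ncard := by
  have hTX : Set.univ ⊆ (T : Set G) * X := by
    rw [← Set.iUnion_mul_left_image]
    exact hcov
  calc Nat.card G = Nat.card (Set.univ : Set G) := Nat.card_univ.symm
    _ ≤ Nat.card ((T : Set G) * X) := Nat.card_mono (Set.toFinite _) hTX
    _ ≤ Nat.card (T : Set G) * Nat.card X := Set.natCard_mul_le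
    _ = T.card * X.ncard := by rw [Nat.card_coe_set_eq, Set.ncard_coe_finset, Nat.card_coe_set_eq]

theorem stmt_5_general {G : Type*} [Group G] [Fintype G] (k : ℕ) (X₁ X₂ X₃ : Set G)
    (h32 : X₃ ⊆ X₂)
    (hs3 : X₃⁻¹ = X₃)
    (hsq3 : X₃ * X₃ ⊆ X₂) (hsq2 : X₂ * X₂ ⊆ X₁)
    (hproper : X₁ ≠ Set.univ)
    (hcov : ∃ T : Finset G, T.card ≤ k ∧ (Set.univ : Set G) ⊆ ⋃ g ∈ T, g • X₃) :
    ∃ A : Set G, ProductFree A ∧ (Fintype.card G : ℝ) / k ≤ (A.ncard : ℝ) := by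
  obtain ⟨g, hg⟩ := (Set.ne_univ_iff_exists_notMem _).1 hproper
  obtain ⟨T, hTk, hTcov⟩ := hcov
  have hX₁ : X₃⁻¹ * X₃ * X₃⁻¹ ⊆ X₁ := by
    rw [hs3]
    exact (Set.mul_subset_mul hsq3 h32).trans hsq2
  have hcard : Fintype.card G ≤ X₃.ncard * k := by
    rw [← Nat.card_eq_fintype_card, mul_comm]
    exact (natCard_le_card_mul_ncard_of_subset_iUnion_smul hTcov).trans
      (Nat.mul_le_mul_right _ hTk)
  refine ⟨g • X₃, productFree_smul_of_notMem (fun h ↦ hg (hX₁ h)), ?_⟩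
  rw [Set.ncard_smul_set]
  exact div_le_of_le_mul₀ k.cast_nonneg (Nat.cast_nonneg _) (by exact_mod_cast hcard)

theorem stmt_5 {G : Type*} [Group G] [Fintype G] (k : ℕ) (X₁ X₂ X₃ : Set G)
    (h32 : X₃ ⊆ X₂) (h21 : X₂ ⊆ X₁)
    (hs1 : X₁⁻¹ = X₁) (hs2 : X₂⁻¹ = X₂) (hs3 : X₃⁻¹ = X₃)
    (h11 : (1 : G) ∈ X₁) (h12 : (1 : G) ∈ X₂) (h13 : (1 : G) ∈ X₃)
    (hsq3 : X₃ * X₃ ⊆ X₂) (hsq2 : X₂ * X₂ ⊆ X₁)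
    (hproper : X₁ ≠ Set.univ)
    (hcov : ∃ T : Finset G, T.card ≤ k ∧ (Set.univ : Set G) ⊆ ⋃ g ∈ T, g • X₃) :
    ∃ A : Set G, ProductFree A ∧ (Fintype.card G : ℝ) / k ≤ (A.ncard : ℝ) :=
  stmt_5_general k X₁ X₂ X₃ h32 hs3 hsq3 hsq2 hproper hcov
end

section
/- Let G be a finite group of order n, let k be a positive integer, and let A be a subset of G with k·|A| ≥ n. Then there exists a subset X of G with |X| ≤ k such that G = X·(AA⁻¹); in particular, (AA⁻¹)² ⊆ X·(AA⁻¹), and G is covered by at most k left-translates of AA⁻¹. -/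
/-!
This is Ruzsa's covering lemma applied to the whole group: a maximal family of pairwise disjoint
left-translates `x • A` has at most `|G| / |A| ≤ k` members, and by maximality every `g • A` meets
some `x • A`, i.e. `g ∈ x • (A * A⁻¹)`.
-/

open Pointwise

theorem Finset.exists_card_le_mul_div_eq_univ {G : Type*} [Group G] [Fintype G] [DecidableEq G]
    {k : ℕ} {A : Finset G} (hA : Fintype.card G ≤ k * A.card) :
    ∃ X : Finset G, X.card ≤ k ∧ X * (A / A) = univ := by
  have hA₀ : A.Nonempty := by
    rw [← card_pos]
    exact Nat.pos_of_mul_pos_left (Fintype.card_pos.trans_le hA)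
  obtain ⟨X, -, hXk, hX⟩ := ruzsa_covering_mul (A := univ) (K := k) hA₀
    (mod_cast (card_le_univ _).trans hA)
  exact ⟨X, by exact_mod_cast hXk, eq_univ_of_forall fun g ↦ hX (mem_univ g)⟩

theorem Set.exists_finset_card_le_univ_eq_mul_mul_inv {G : Type*} [Group G] [Fintype G]
    {k : ℕ} {A : Set G} (hA : Fintype.card G ≤ k * A.ncard) :
    ∃ X : Finset G, X.card ≤ k ∧ (Set.univ : Set G) = (X : Set G) * (A * A⁻¹) := by
  classical
  obtain ⟨X, hXk, hX⟩ := Finset.exists_card_le_mul_div_eq_univ (A := A.toFinset)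
    (by rwa [← ncard_eq_toFinset_card'])
  refine ⟨X, hXk, ?_⟩
  have hXA := congrArg ((↑) : Finset G → Set G) hX
  rwa [Finset.coe_mul, Finset.coe_div, coe_toFinset, Finset.coe_univ, div_eq_mul_inv, eq_comm] at hXA

theorem stmt_7_general {G : Type*} [Group G] [Fintype G] (k : ℕ)
    (A : Set G) (hA : Fintype.card G ≤ k * A.ncard) :
    ∃ X : Finset G, X.card ≤ k ∧
      (Set.univ : Set G) = (X : Set G) * (A * A⁻¹) ∧
      (A * A⁻¹) * (A * A⁻¹) ⊆ (X : Set G) * (A * A⁻¹) ∧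
      ∃ T : Finset G, T.card ≤ k ∧ (Set.univ : Set G) ⊆ ⋃ g ∈ T, g • (A * A⁻¹) := by
  obtain ⟨X, hXk, hX⟩ := Set.exists_finset_card_le_univ_eq_mul_mul_inv hA
  refine ⟨X, hXk, hX, hX ▸ Set.subset_univ _, X, hXk, ?_⟩
  rw [← Finset.set_biUnion_coe, Set.iUnion_smul_set, smul_eq_mul, ← hX]

theorem stmt_7 {G : Type*} [Group G] [Fintype G] (k : ℕ) (hk : 0 < k)
    (A : Set G) (hA : Fintype.card G ≤ k * A.ncard) :
    ∃ X : Finset G, X.card ≤ k ∧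
      (Set.univ : Set G) = (X : Set G) * (A * A⁻¹) ∧
      (A * A⁻¹) * (A * A⁻¹) ⊆ (X : Set G) * (A * A⁻¹) ∧
      ∃ T : Finset G, T.card ≤ k ∧ (Set.univ : Set G) ⊆ ⋃ g ∈ T, g • (A * A⁻¹) :=
  stmt_7_general k A hA
end

section
/- For all real numbers c, ε > 0 there exists a positive integer d = d(c, ε) such that the following holds. If G is a d-quasirandom finite group of order n and A, B are subsets of G each of size at least c·n, then |AB| ≥ (1 − ε)·n. -/
open Pointwise

/-- A group `G` is `d`-quasirandom if every homomorphism from `G` into a complex unitary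
group `U_m(ℂ)` with `m < d` is trivial. -/
def IsQuasirandom (d : ℕ) (G : Type*) [Group G] : Prop :=
  ∀ m : ℕ, m < d → ∀ f : G →* Matrix.unitaryGroup (Fin m) ℂ, ∀ g : G, f g = 1

noncomputable section QR
set_option linter.unusedSectionVars false

variable {G : Type} [Group G] [Fintype G]

def ind (B : Set G) : EuclideanSpace ℂ G := WithLp.toLp 2 (fun x => B.indicator 1 x)

def convR (B : Set G) : EuclideanSpace ℂ G →ₗ[ℂ] EuclideanSpace ℂ G where
  toFun f := WithLp.toLp 2 (fun x => ∑ y, f y * B.indicator 1 (y⁻¹ * x))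
  map_add' f g := by
    ext x
    simp [add_mul, Finset.sum_add_distrib]
  map_smul' c f := by
    ext x
    simp [Finset.mul_sum, mul_assoc]

def convL (B : Set G) : EuclideanSpace ℂ G →ₗ[ℂ] EuclideanSpace ℂ G where
  toFun f := WithLp.toLp 2 (fun x => ∑ y, B.indicator 1 (x⁻¹ * y) * f y)
  map_add' f g := by
    ext x
    simp [mul_add, Finset.sum_add_distrib]
  map_smul' c f := by
    ext x
    simp [Finset.mul_sum]; ring_nf
    simp [mul_comm, mul_left_comm]

lemma convR_apply (B : Set G) (f : EuclideanSpace ℂ G) (x : G) :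
    convR B f x = ∑ y, f y * B.indicator 1 (y⁻¹ * x) := rfl

lemma convL_apply (B : Set G) (f : EuclideanSpace ℂ G) (x : G) :
    convL B f x = ∑ y, B.indicator 1 (x⁻¹ * y) * f y := rfl

lemma ind_conj (B : Set G) (x : G) :
    (starRingEnd ℂ) (B.indicator 1 x) = B.indicator 1 x := by
  classical
  by_cases h : x ∈ B <;> simp [Set.indicator_apply, h]

local notation "⟪" x ", " y "⟫" => @inner ℂ _ _ x y

lemma inner_convR (B : Set G) (f g : EuclideanSpace ℂ G) :
    ⟪convR B f, g⟫ = ⟪f, convL B g⟫ := by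
  simp only [PiLp.inner_apply, convR_apply, convL_apply, RCLike.inner_apply]
  simp only [map_sum, map_mul, ind_conj, Finset.sum_mul, Finset.mul_sum]
  rw [Finset.sum_comm]
  refine Finset.sum_congr rfl fun y _ => Finset.sum_congr rfl fun x _ => by ring

lemma inner_convL (B : Set G) (f g : EuclideanSpace ℂ G) :
    ⟪convL B f, g⟫ = ⟪f, convR B g⟫ := by
  rw [← inner_conj_symm, ← inner_convR, inner_conj_symm]

/-- The positive semidefinite operator `Mᴴ M` for `M = convR B`. -/
def opS (B : Set G) : EuclideanSpace ℂ G →ₗ[ℂ] EuclideanSpace ℂ G :=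
  convL B ∘ₗ convR B

lemma isSymmetric_opS (B : Set G) : (opS B).IsSymmetric := fun f g => by
  simp only [opS, LinearMap.comp_apply]
  rw [inner_convL, ← inner_convR]

lemma inner_opS (B : Set G) (f : EuclideanSpace ℂ G) :
    ⟪f, opS B f⟫ = (‖convR B f‖ ^ 2 : ℝ) := by
  rw [opS, LinearMap.comp_apply, ← inner_convR, inner_self_eq_norm_sq_to_K]
  norm_cast


/-- Left regular representation (translation). -/
def rho (g : G) : EuclideanSpace ℂ G →ₗ[ℂ] EuclideanSpace ℂ G where
  toFun f := WithLp.toLp 2 (fun x => f (g⁻¹ * x))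
  map_add' _ _ := rfl
  map_smul' _ _ := rfl

lemma rho_apply (g : G) (f : EuclideanSpace ℂ G) (x : G) : rho g f x = f (g⁻¹ * x) := rfl

lemma rho_one : (rho (1 : G)) = LinearMap.id := by
  ext f x; exact congrArg f (by simp)

lemma rho_mul (g h : G) : rho (g * h) = rho g ∘ₗ rho h := by
  ext f x; exact congrArg f (by group)

lemma inner_rho_rho (g : G) (f h : EuclideanSpace ℂ G) :
    ⟪rho g f, rho g h⟫ = ⟪f, h⟫ := by
  simp only [PiLp.inner_apply, rho_apply, RCLike.inner_apply]
  exact Fintype.sum_equiv (Equiv.mulLeft g⁻¹) _ _ fun x => rfl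

lemma convR_rho (B : Set G) (g : G) (f : EuclideanSpace ℂ G) :
    convR B (rho g f) = rho g (convR B f) := by
  ext x
  simp only [convR_apply, rho_apply]
  refine Fintype.sum_equiv (Equiv.mulLeft g⁻¹) _ _ fun y => ?_
  simp only [Equiv.coe_mulLeft]
  rw [show (g⁻¹ * y)⁻¹ * (g⁻¹ * x) = y⁻¹ * x by group]

lemma convL_rho (B : Set G) (g : G) (f : EuclideanSpace ℂ G) :
    convL B (rho g f) = rho g (convL B f) := by
  ext x
  simp only [convL_apply, rho_apply]
  refine Fintype.sum_equiv (Equiv.mulLeft g⁻¹) _ _ fun y => ?_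
  simp only [Equiv.coe_mulLeft]
  rw [show (g⁻¹ * x)⁻¹ * (g⁻¹ * y) = x⁻¹ * y by group]

lemma opS_rho (B : Set G) (g : G) (f : EuclideanSpace ℂ G) :
    opS B (rho g f) = rho g (opS B f) := by
  simp [opS, convR_rho, convL_rho]

/-- The constant-one vector. -/
def onesVec : EuclideanSpace ℂ G := WithLp.toLp 2 (fun _ => 1)

/-- The line of constants. -/
def constSub (G : Type) [Group G] [Fintype G] : Submodule ℂ (EuclideanSpace ℂ G) :=
  ℂ ∙ (onesVec : EuclideanSpace ℂ G)

lemma rho_onesVec (g : G) : rho g (onesVec : EuclideanSpace ℂ G) = onesVec := rfl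

lemma sum_indicator (B : Set G) : ∑ z, (B.indicator 1 z : ℂ) = (B.ncard : ℂ) := by
  classical
  simp only [Set.indicator_apply, Pi.one_apply]
  rw [Finset.sum_boole]
  congr 1
  rw [Set.ncard_eq_toFinset_card' B]
  congr 1
  ext z
  simp

lemma convR_onesVec (B : Set G) :
    convR B (onesVec : EuclideanSpace ℂ G) = (B.ncard : ℂ) • onesVec := by
  ext x
  simp only [convR_apply, onesVec, PiLp.smul_apply, smul_eq_mul, mul_one, one_mul]
  rw [← sum_indicator B]
  exact Fintype.sum_equiv ((Equiv.inv G).trans (Equiv.mulRight x)) _ _ fun y => rfl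

lemma convL_onesVec (B : Set G) :
    convL B (onesVec : EuclideanSpace ℂ G) = (B.ncard : ℂ) • onesVec := by
  ext x
  simp only [convL_apply, onesVec, PiLp.smul_apply, smul_eq_mul, mul_one]
  rw [← sum_indicator B]
  exact Fintype.sum_equiv (Equiv.mulLeft x⁻¹) _ _ fun y => rfl

lemma fixed_mem_const (v : EuclideanSpace ℂ G) (hv : ∀ g : G, rho g v = v) :
    v ∈ constSub G := by
  have hvx : ∀ x : G, v x = v 1 := by
    intro x
    have h2 : v (x⁻¹ * x) = v x := congrFun (congrArg WithLp.ofLp (hv x)) x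
    rw [← h2, inv_mul_cancel]
  have : v = v 1 • (onesVec : EuclideanSpace ℂ G) := by
    ext x; simp [onesVec, hvx x]
  rw [this, constSub]
  exact Submodule.smul_mem _ _ (Submodule.mem_span_singleton_self _)



section Invariant

open scoped InnerProductSpace

/-- Abstract: a unitary action of a `d`-quasirandom group on a space of dimension `< d`
is trivial. -/
lemma fixed_of_lowdim {d : ℕ} {G : Type} [Group G] {E : Type}
    [NormedAddCommGroup E] [InnerProductSpace ℂ E] [FiniteDimensional ℂ E]
    (hq : IsQuasirandom d G)
    (τ : G → E →ₗ[ℂ] E) (hone : τ 1 = LinearMap.id)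
    (hmul : ∀ g h : G, τ (g * h) = τ g ∘ₗ τ h)
    (hinner : ∀ (g : G) (v w : E), ⟪τ g v, τ g w⟫_ℂ = ⟪v, w⟫_ℂ)
    (hlt : Module.finrank ℂ E < d) :
    ∀ (g : G) (v : E), τ g v = v := by
  set m := Module.finrank ℂ E with hm
  let b : OrthonormalBasis (Fin m) ℂ E := stdOrthonormalBasis ℂ E
  let φ : G → Matrix (Fin m) (Fin m) ℂ := fun g =>
    LinearMap.toMatrix b.toBasis b.toBasis (τ g)
  have φ_apply : ∀ (g : G) (i j : Fin m), φ g i j = ⟪b i, τ g (b j)⟫_ℂ := by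
    intro g i j
    rw [show φ g i j = b.toBasis.repr ((τ g) (b.toBasis j)) i from
      LinearMap.toMatrix_apply _ _ _ _ _]
    rw [OrthonormalBasis.coe_toBasis, OrthonormalBasis.coe_toBasis_repr_apply,
      OrthonormalBasis.repr_apply_apply]
  have φ_unitary : ∀ g : G, φ g ∈ Matrix.unitaryGroup (Fin m) ℂ := by
    intro g
    rw [Matrix.mem_unitaryGroup_iff']
    ext j k
    rw [Matrix.mul_apply]
    simp only [Matrix.star_apply, φ_apply]
    calc ∑ i, star ⟪b i, τ g (b j)⟫_ℂ * ⟪b i, τ g (b k)⟫_ℂ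
        = ∑ i, ⟪τ g (b j), b i⟫_ℂ * ⟪b i, τ g (b k)⟫_ℂ := by
          refine Finset.sum_congr rfl fun i _ => ?_
          rw [← inner_conj_symm (b i)]
          simp [RCLike.star_def]
      _ = ⟪τ g (b j), τ g (b k)⟫_ℂ := b.sum_inner_mul_inner _ _
      _ = ⟪b j, b k⟫_ℂ := hinner g _ _
      _ = (1 : Matrix (Fin m) (Fin m) ℂ) j k := by
          rcases eq_or_ne j k with h | h
          · subst h
            rw [orthonormal_iff_ite.mp b.orthonormal]
            simp
          · rw [orthonormal_iff_ite.mp b.orthonormal]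
            simp [h]
  let Φ : G →* Matrix.unitaryGroup (Fin m) ℂ :=
    { toFun := fun g => ⟨φ g, φ_unitary g⟩
      map_one' := by
        apply Subtype.ext
        show φ 1 = 1
        rw [show φ 1 = LinearMap.toMatrix b.toBasis b.toBasis (τ 1) from rfl, hone,
          LinearMap.toMatrix_id]
      map_mul' := by
        intro g h
        apply Subtype.ext
        show φ (g * h) = φ g * φ h
        rw [show φ (g*h) = LinearMap.toMatrix b.toBasis b.toBasis (τ (g*h)) from rfl, hmul,
          LinearMap.toMatrix_comp b.toBasis b.toBasis b.toBasis] }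
  intro g v
  have h1 : Φ g = 1 := hq m hlt Φ g
  have h2 : φ g = 1 := congrArg Subtype.val h1
  have h3 : τ g = LinearMap.id := by
    apply (LinearMap.toMatrix b.toBasis b.toBasis).injective
    rw [show LinearMap.toMatrix b.toBasis b.toBasis (τ g) = φ g from rfl, h2,
      LinearMap.toMatrix_id]
  rw [h3]; rfl

lemma exists_orthonormal_eigen {d : ℕ} {G : Type} [Group G] {E : Type}
    [NormedAddCommGroup E] [InnerProductSpace ℂ E] [FiniteDimensional ℂ E]
    (hq : IsQuasirandom d G)
    (τ : G → E →ₗ[ℂ] E) (hone : τ 1 = LinearMap.id)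
    (hmul : ∀ g h : G, τ (g * h) = τ g ∘ₗ τ h)
    (hinner : ∀ (g : G) (v w : E), ⟪τ g v, τ g w⟫_ℂ = ⟪v, w⟫_ℂ)
    (CC : Submodule ℂ E)
    (hfixC : ∀ v : E, (∀ g : G, τ g v = v) → v ∈ CC)
    (hCinv : ∀ g : G, ∀ v ∈ CC, τ g v ∈ CC)
    (S : E →ₗ[ℂ] E) (hcomm : ∀ (g : G) (v : E), S (τ g v) = τ g (S v))
    (μ : ℂ) (u : E) (hu : u ≠ 0) (huC : u ∈ CCᗮ) (huS : S u = μ • u) :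
    ∃ w : Fin d → E, Orthonormal ℂ w ∧ ∀ j, S (w j) = μ • w j := by
  -- τ is invertible with inverse τ g⁻¹
  have hinv : ∀ (g : G) (v : E), τ g (τ g⁻¹ v) = v := by
    intro g v
    have : (τ g ∘ₗ τ g⁻¹) v = v := by
      rw [← hmul, mul_inv_cancel, hone]; rfl
    exact this
  -- CCᗮ is invariant
  have hperp : ∀ g : G, ∀ v ∈ CCᗮ, τ g v ∈ CCᗮ := by
    intro g v hv
    intro x hx
    have h1 : ⟪x, τ g v⟫_ℂ = ⟪τ g (τ g⁻¹ x), τ g v⟫_ℂ := by rw [hinv]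
    rw [Submodule.mem_orthogonal] at hv
    calc ⟪x, τ g v⟫_ℂ = ⟪τ g⁻¹ x, v⟫_ℂ := by rw [h1, hinner]
      _ = 0 := hv _ (hCinv g⁻¹ x hx)
  -- the eigenspace within CCᗮ
  set W : Submodule ℂ E := Module.End.eigenspace S μ ⊓ CCᗮ with hWdef
  have huW : u ∈ W :=
    Submodule.mem_inf.mpr ⟨Module.End.mem_eigenspace_iff.mpr huS, huC⟩
  have hWinv : ∀ g : G, ∀ v ∈ W, τ g v ∈ W := by
    intro g v hv
    rcases Submodule.mem_inf.mp hv with ⟨h1, h2⟩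
    refine Submodule.mem_inf.mpr ⟨?_, hperp g v h2⟩
    rw [Module.End.mem_eigenspace_iff] at h1 ⊢
    rw [hcomm, h1, map_smul]
  have hWd : d ≤ Module.finrank ℂ W := by
    by_contra hlt
    push_neg at hlt
    let σ : G → (W →ₗ[ℂ] W) := fun g => (τ g).restrict (hWinv g)
    have σ_coe : ∀ (g : G) (v : W), ((σ g v : W) : E) = τ g (v : E) := fun g v => rfl
    have σ_one : σ 1 = LinearMap.id := by
      apply LinearMap.ext; intro v
      apply Subtype.ext
      rw [σ_coe, hone]; rfl
    have σ_mul : ∀ g h : G, σ (g * h) = σ g ∘ₗ σ h := by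
      intro g h
      apply LinearMap.ext; intro v
      apply Subtype.ext
      rw [LinearMap.comp_apply, σ_coe, σ_coe, σ_coe, hmul]; rfl
    have σ_inner : ∀ (g : G) (v w : W), ⟪σ g v, σ g w⟫_ℂ = ⟪v, w⟫_ℂ := by
      intro g v w
      rw [Submodule.coe_inner, Submodule.coe_inner, σ_coe, σ_coe, hinner]
    have key : ∀ (g : G) (v : W), σ g v = v :=
      fixed_of_lowdim hq σ σ_one σ_mul σ_inner hlt
    have hfix : ∀ g : G, τ g u = u := by
      intro g
      have h4 := congrArg Subtype.val (key g ⟨u, huW⟩)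
      rw [σ_coe] at h4
      exact h4
    have hC : u ∈ CC := hfixC u hfix
    have : u ∈ CC ⊓ CCᗮ := ⟨hC, huC⟩
    rw [Submodule.inf_orthogonal_eq_bot, Submodule.mem_bot] at this
    exact hu this
  -- pick an orthonormal family of size d in W
  let m := Module.finrank ℂ W
  let b : OrthonormalBasis (Fin m) ℂ W := stdOrthonormalBasis ℂ W
  refine ⟨fun j => (b (Fin.castLE hWd j) : W), ?_, ?_⟩
  · rw [orthonormal_iff_ite]
    intro i j
    rw [← Submodule.coe_inner, orthonormal_iff_ite.mp b.orthonormal]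
    rcases eq_or_ne i j with h | h
    · subst h; simp
    · have hne : Fin.castLE hWd i ≠ Fin.castLE hWd j :=
        fun hc => h (Fin.castLE_injective hWd hc)
      simp [hne, h]
  · intro j
    have := (Submodule.mem_inf.mp (b (Fin.castLE hWd j)).2).1
    exact Module.End.mem_eigenspace_iff.mp this

end Invariant

section Trace

open scoped InnerProductSpace

variable {F : Type} [NormedAddCommGroup F] [InnerProductSpace ℂ F] [FiniteDimensional ℂ F]

lemma trace_eq_sum_inner {ι : Type} [Fintype ι] [DecidableEq ι]
    (b : OrthonormalBasis ι ℂ F) (T : F →ₗ[ℂ] F) :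
    LinearMap.trace ℂ F T = ∑ i, ⟪b i, T (b i)⟫_ℂ := by
  rw [LinearMap.trace_eq_matrix_trace ℂ b.toBasis, Matrix.trace]
  refine Finset.sum_congr rfl fun i _ => ?_
  rw [Matrix.diag_apply, LinearMap.toMatrix_apply, OrthonormalBasis.coe_toBasis,
    OrthonormalBasis.coe_toBasis_repr_apply, OrthonormalBasis.repr_apply_apply]

lemma inner_mul_inner_self (b u : F) :
    ⟪u, b⟫_ℂ * ⟪b, u⟫_ℂ = ((‖⟪b, u⟫_ℂ‖ ^ 2 : ℝ) : ℂ) := by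
  rw [← inner_conj_symm u, RCLike.conj_mul]
  norm_cast

lemma quad_form {n : ℕ} (hn : Module.finrank ℂ F = n) {S : F →ₗ[ℂ] F}
    (hS : S.IsSymmetric) (u : F) :
    ⟪u, S u⟫_ℂ =
      ((∑ i, hS.eigenvalues hn i * ‖⟪hS.eigenvectorBasis hn i, u⟫_ℂ‖ ^ 2 : ℝ) : ℂ) := by
  rw [← (hS.eigenvectorBasis hn).sum_inner_mul_inner u (S u)]
  push_cast
  refine Finset.sum_congr rfl fun i _ => ?_
  have h1 : ⟪hS.eigenvectorBasis hn i, S u⟫_ℂ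
      = (hS.eigenvalues hn i : ℂ) * ⟪hS.eigenvectorBasis hn i, u⟫_ℂ := by
    have h2 := hS.eigenvectorBasis_apply_self_apply hn u i
    rwa [OrthonormalBasis.repr_apply_apply, OrthonormalBasis.repr_apply_apply] at h2
  rw [h1, show ∀ a b c : ℂ, a * (b * c) = b * (a * c) from fun a b c => by ring,
    inner_mul_inner_self]
  push_cast
  ring

lemma parseval {ι : Type} [Fintype ι] [DecidableEq ι]
    (b : OrthonormalBasis ι ℂ F) (u : F) :
    ∑ i, ‖⟪b i, u⟫_ℂ‖ ^ 2 = ‖u‖ ^ 2 := by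
  have h1 : ((∑ i, ‖⟪b i, u⟫_ℂ‖ ^ 2 : ℝ) : ℂ) = ((‖u‖ ^ 2 : ℝ) : ℂ) := by
    push_cast
    calc ∑ i, ((‖⟪b i, u⟫_ℂ‖ : ℂ)) ^ 2
        = ∑ i, ⟪u, b i⟫_ℂ * ⟪b i, u⟫_ℂ := by
          refine Finset.sum_congr rfl fun i _ => ?_
          rw [inner_mul_inner_self]; push_cast; ring
      _ = ⟪u, u⟫_ℂ := b.sum_inner_mul_inner u u
      _ = ((‖u‖ : ℂ)) ^ 2 := by rw [inner_self_eq_norm_sq_to_K]; norm_cast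
  exact_mod_cast h1

end Trace

section Concrete

open scoped InnerProductSpace

lemma opS_const (B : Set G) :
    opS B (onesVec : EuclideanSpace ℂ G) = ((B.ncard : ℂ) * B.ncard) • onesVec := by
  rw [opS, LinearMap.comp_apply, convR_onesVec, map_smul, convL_onesVec, smul_smul]

lemma opS_mem_const (B : Set G) (v : EuclideanSpace ℂ G) (hv : v ∈ constSub G) :
    opS B v ∈ constSub G := by
  obtain ⟨a, rfl⟩ := Submodule.mem_span_singleton.mp hv
  rw [map_smul, opS_const]
  exact Submodule.smul_mem _ _ (Submodule.smul_mem _ _ (Submodule.mem_span_singleton_self _))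

lemma const_inv (g : G) (v : EuclideanSpace ℂ G) (hv : v ∈ constSub G) :
    rho g v ∈ constSub G := by
  obtain ⟨a, rfl⟩ := Submodule.mem_span_singleton.mp hv
  rw [map_smul, rho_onesVec]
  exact Submodule.smul_mem _ _ (Submodule.mem_span_singleton_self _)

lemma opS_mem_perp (B : Set G) (v : EuclideanSpace ℂ G) (hv : v ∈ (constSub G)ᗮ) :
    opS B v ∈ (constSub G)ᗮ := by
  rw [Submodule.mem_orthogonal] at hv ⊢
  intro x hx
  rw [← isSymmetric_opS B x v]
  exact hv _ (opS_mem_const B x hx)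

lemma ind_sq (B : Set G) (z : G) :
    (B.indicator 1 z : ℂ) * B.indicator 1 z = B.indicator 1 z := by
  classical
  by_cases h : z ∈ B <;> simp [Set.indicator_apply, h]

lemma trace_opS (B : Set G) :
    LinearMap.trace ℂ (EuclideanSpace ℂ G) (opS B)
      = ((Fintype.card G : ℝ) * B.ncard : ℝ) := by
  classical
  rw [trace_eq_sum_inner (EuclideanSpace.basisFun G ℂ) (opS B)]
  have h1 : ∀ x : G,
      ⟪(EuclideanSpace.basisFun G ℂ) x, opS B ((EuclideanSpace.basisFun G ℂ) x)⟫_ℂ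
        = (B.ncard : ℂ) := by
    intro x
    rw [← OrthonormalBasis.repr_apply_apply, EuclideanSpace.basisFun_repr]
    have hconv : convR B ((EuclideanSpace.basisFun G ℂ) x)
        = (WithLp.toLp 2 (fun y => B.indicator 1 (x⁻¹ * y)) : EuclideanSpace ℂ G) := by
      ext y
      rw [show ((EuclideanSpace.basisFun G ℂ) x : EuclideanSpace ℂ G)
        = EuclideanSpace.single x 1 from EuclideanSpace.basisFun_apply (ι := G) (𝕜 := ℂ) x, convR_apply]
      simp [EuclideanSpace.single_apply]
    rw [show opS B ((EuclideanSpace.basisFun G ℂ) x)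
      = convL B (convR B ((EuclideanSpace.basisFun G ℂ) x)) from rfl, hconv]
    rw [convL_apply]
    calc ∑ y, B.indicator 1 (x⁻¹ * y) * B.indicator 1 (x⁻¹ * y)
        = ∑ y, (B.indicator 1 (x⁻¹ * y) : ℂ) := by
          exact Finset.sum_congr rfl fun y _ => ind_sq B _
      _ = ∑ z, (B.indicator 1 z : ℂ) :=
          Fintype.sum_equiv (Equiv.mulLeft x⁻¹) _ _ fun y => rfl
      _ = (B.ncard : ℂ) := sum_indicator B
  rw [Finset.sum_congr rfl (fun x _ => h1 x), Finset.sum_const, Finset.card_univ]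
  push_cast
  ring

end Concrete

section Master

open scoped InnerProductSpace

lemma norm_convR_sq_le {d : ℕ} (hq : IsQuasirandom d G) (hd : 0 < d) (B : Set G)
    (f : EuclideanSpace ℂ G) (hf : f ∈ (constSub G)ᗮ) :
    ‖convR B f‖ ^ 2 ≤ ((Fintype.card G : ℝ) * B.ncard / d) * ‖f‖ ^ 2 := by
  classical
  have hn : Module.finrank ℂ (EuclideanSpace ℂ G) = Fintype.card G := finrank_euclideanSpace
  set n := Fintype.card G with hndef
  set S := opS B with hSdef
  have hS : S.IsSymmetric := isSymmetric_opS B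
  set v := hS.eigenvectorBasis hn with hvdef
  set μ := hS.eigenvalues hn with hμdef
  set κ : ℝ := (n * B.ncard / d : ℝ) with hκdef
  have hκ0 : 0 ≤ κ := by positivity
  have hμre : ∀ i, ⟪v i, S (v i)⟫_ℂ = ((μ i : ℝ) : ℂ) := by
    intro i
    rw [hS.apply_eigenvectorBasis hn i, inner_smul_right, inner_self_eq_norm_sq_to_K]
    have : ‖v i‖ = 1 := v.orthonormal.1 i
    rw [this]
    simp [μ]
  have hμ0 : ∀ i, 0 ≤ μ i := by
    intro i
    have h1 := inner_opS B (v i)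
    rw [← hSdef, hμre i] at h1
    have h2 : (μ i : ℝ) = ‖convR B (v i)‖ ^ 2 := by exact_mod_cast h1
    rw [h2]
    positivity
  have htr : ∑ i, μ i = (n : ℝ) * B.ncard := by
    have h1 := trace_eq_sum_inner v S
    rw [trace_opS B] at h1
    have h2 : ((∑ i, μ i : ℝ) : ℂ) = (((n : ℝ) * B.ncard : ℝ) : ℂ) := by
      calc ((∑ i, μ i : ℝ) : ℂ) = ∑ i, ((μ i : ℝ) : ℂ) := by push_cast; rfl
        _ = ∑ i, ⟪v i, S (v i)⟫_ℂ := Finset.sum_congr rfl fun i _ => (hμre i).symm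
        _ = (((n : ℝ) * B.ncard : ℝ) : ℂ) := h1.symm
    exact_mod_cast h2
  have hbound : ∀ i, ⟪v i, f⟫_ℂ ≠ 0 → μ i ≤ κ := by
    intro i hci
    by_cases hzero : Module.End.eigenspace S ((μ i : ℝ) : ℂ) ⊓ (constSub G)ᗮ = ⊥
    · exfalso
      obtain ⟨c, hc, u, hu, hvi⟩ := (constSub G).exists_add_mem_mem_orthogonal (v i)
      have h1 : S (v i) = ((μ i : ℝ) : ℂ) • (v i) := hS.apply_eigenvectorBasis hn i
      have h2 : S c + S u = ((μ i : ℝ):ℂ) • c + ((μ i : ℝ):ℂ) • u := by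
        rw [← map_add, ← smul_add, ← hvi, h1]
      have h3 : S c - ((μ i : ℝ):ℂ) • c = ((μ i : ℝ):ℂ) • u - S u := by
        rw [sub_eq_sub_iff_add_eq_add, h2]
        abel
      have h4 : S c - ((μ i : ℝ):ℂ) • c ∈ constSub G :=
        Submodule.sub_mem _ (opS_mem_const B c hc) (Submodule.smul_mem _ _ hc)
      have h5 : ((μ i : ℝ):ℂ) • u - S u ∈ (constSub G)ᗮ :=
        Submodule.sub_mem _ (Submodule.smul_mem _ _ hu) (opS_mem_perp B u hu)
      have h6 : ((μ i : ℝ):ℂ) • u - S u = 0 := by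
        have h7 : ((μ i : ℝ):ℂ) • u - S u ∈ constSub G ⊓ (constSub G)ᗮ := ⟨h3 ▸ h4, h5⟩
        rwa [Submodule.inf_orthogonal_eq_bot, Submodule.mem_bot] at h7
      have h8 : u ∈ Module.End.eigenspace S ((μ i : ℝ) : ℂ) ⊓ (constSub G)ᗮ :=
        Submodule.mem_inf.mpr
          ⟨Module.End.mem_eigenspace_iff.mpr (by
              have := sub_eq_zero.mp h6
              exact this.symm), hu⟩
      rw [hzero, Submodule.mem_bot] at h8
      apply hci
      have h9 : v i ∈ constSub G := by
        rw [hvi, h8, add_zero]; exact hc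
      exact (Submodule.mem_orthogonal _ f).mp hf (v i) h9
    · obtain ⟨u, hu, hune⟩ := Submodule.exists_mem_ne_zero_of_ne_bot hzero
      rcases Submodule.mem_inf.mp hu with ⟨hu1, hu2⟩
      obtain ⟨w, hw_on, hw_eig⟩ :=
        exists_orthonormal_eigen hq rho rho_one rho_mul inner_rho_rho (constSub G)
          fixed_mem_const const_inv S (opS_rho B) ((μ i : ℝ) : ℂ) u hune hu2
          (Module.End.mem_eigenspace_iff.mp hu1)
      have hwq : ∀ j : Fin d, μ i = ∑ i', μ i' * ‖⟪v i', w j⟫_ℂ‖ ^ 2 := by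
        intro j
        have h1 := quad_form hn hS (w j)
        rw [hw_eig j, inner_smul_right, inner_self_eq_norm_sq_to_K, hw_on.1 j] at h1
        norm_num at h1
        exact_mod_cast h1
      have hsum : (d : ℝ) * μ i ≤ ∑ i', μ i' := by
        calc (d : ℝ) * μ i = ∑ _j : Fin d, μ i := by
              rw [Finset.sum_const, Finset.card_univ, Fintype.card_fin, nsmul_eq_mul]
          _ = ∑ j : Fin d, ∑ i', μ i' * ‖⟪v i', w j⟫_ℂ‖ ^ 2 :=
              Finset.sum_congr rfl fun j _ => hwq j
          _ = ∑ i', ∑ j : Fin d, μ i' * ‖⟪v i', w j⟫_ℂ‖ ^ 2 := Finset.sum_comm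
          _ = ∑ i', μ i' * ∑ j : Fin d, ‖⟪v i', w j⟫_ℂ‖ ^ 2 := by
              simp [Finset.mul_sum]
          _ ≤ ∑ i', μ i' * 1 := by
              refine Finset.sum_le_sum fun i' _ => ?_
              refine mul_le_mul_of_nonneg_left ?_ (hμ0 i')
              have hb := hw_on.sum_inner_products_le (v i') (s := Finset.univ)
              have hnv : ‖v i'‖ = 1 := v.orthonormal.1 i'
              rw [hnv] at hb
              calc ∑ j : Fin d, ‖⟪v i', w j⟫_ℂ‖ ^ 2
                  = ∑ j : Fin d, ‖⟪w j, v i'⟫_ℂ‖ ^ 2 := by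
                    exact Finset.sum_congr rfl fun j _ => by rw [norm_inner_symm]
                _ ≤ 1 ^ 2 := hb
                _ = 1 := one_pow 2
          _ = ∑ i', μ i' := by simp
      rw [htr] at hsum
      rw [hκdef]
      rw [le_div_iff₀ (by exact_mod_cast hd)]
      calc μ i * d = d * μ i := mul_comm _ _
        _ ≤ (n : ℝ) * B.ncard := hsum
  -- final assembly
  have hqf : (‖convR B f‖ ^ 2 : ℝ) = ∑ i, μ i * ‖⟪v i, f⟫_ℂ‖ ^ 2 := by
    have h1 := quad_form hn hS f
    rw [← hμdef, ← hvdef] at h1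
    have h2 : ⟪f, S f⟫_ℂ = ((‖convR B f‖ ^ 2 : ℝ) : ℂ) := inner_opS B f
    rw [h2] at h1
    exact_mod_cast h1
  have hpars : ∑ i, ‖⟪v i, f⟫_ℂ‖ ^ 2 = ‖f‖ ^ 2 := parseval v f
  calc ‖convR B f‖ ^ 2 = ∑ i, μ i * ‖⟪v i, f⟫_ℂ‖ ^ 2 := hqf
    _ ≤ ∑ i, κ * ‖⟪v i, f⟫_ℂ‖ ^ 2 := by
        refine Finset.sum_le_sum fun i _ => ?_
        by_cases hci : ⟪v i, f⟫_ℂ = 0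
        · simp [hci]
        · exact mul_le_mul_of_nonneg_right (hbound i hci) (by positivity)
    _ = κ * ∑ i, ‖⟪v i, f⟫_ℂ‖ ^ 2 := by rw [Finset.mul_sum]
    _ = κ * ‖f‖ ^ 2 := by rw [hpars]

end Master

section Final

open scoped InnerProductSpace

lemma norm_sq_eq_sum' (u : EuclideanSpace ℂ G) : ‖u‖ ^ 2 = ∑ x, ‖u x‖ ^ 2 := by
  rw [EuclideanSpace.norm_eq, Real.sq_sqrt (by positivity)]

lemma convR_ind_zero (A B : Set G) (x : G) (hx : x ∉ A * B) :
    convR B (ind A) x = 0 := by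
  classical
  rw [convR_apply]
  apply Finset.sum_eq_zero
  intro y _
  by_cases hy : y ∈ A
  · by_cases hz : y⁻¹ * x ∈ B
    · exfalso
      apply hx
      have := Set.mul_mem_mul hy hz
      rwa [mul_inv_cancel_left] at this
    · rw [show (ind A y : ℂ) * B.indicator 1 (y⁻¹ * x)
        = ind A y * B.indicator 1 (y⁻¹ * x) from rfl]
      rw [Set.indicator_of_notMem hz, mul_zero]
  · rw [show (ind A y : ℂ) = A.indicator 1 y from rfl, Set.indicator_of_notMem hy, zero_mul]

/-- The main counting bound. -/
lemma main_count {d : ℕ} (hq : IsQuasirandom d G) (hd : 0 < d) (A B : Set G) :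
    ((Fintype.card G : ℝ) - (A * B).ncard) * ((A.ncard : ℝ) * B.ncard / Fintype.card G) ^ 2
      ≤ (Fintype.card G : ℝ) ^ 2 * B.ncard / d := by
  classical
  set n := Fintype.card G with hndef
  have hn0 : 0 < n := Fintype.card_pos
  have hnne : (n : ℂ) ≠ 0 := by exact_mod_cast hn0.ne'
  set a : ℝ := (A.ncard : ℝ) with hadef
  set b : ℝ := (B.ncard : ℝ) with hbdef
  set f : EuclideanSpace ℂ G := ind A - ((a / n : ℝ) : ℂ) • onesVec with hfdef
  have hfx : ∀ x : G, f x = (A.indicator 1 x : ℂ) - ((a / n : ℝ) : ℂ) := by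
    intro x
    rw [hfdef]
    simp [ind, onesVec]
  have hf : f ∈ (constSub G)ᗮ := by
    rw [constSub, Submodule.mem_orthogonal_singleton_iff_inner_right, PiLp.inner_apply]
    simp only [RCLike.inner_apply, onesVec, map_one, one_mul, mul_one]
    calc ∑ x : G, f x
        = ∑ x : G, ((A.indicator 1 x : ℂ) - ((a / n : ℝ) : ℂ)) :=
          Finset.sum_congr rfl fun x _ => hfx x
      _ = (A.ncard : ℂ) - n * ((a / n : ℝ) : ℂ) := by
          rw [Finset.sum_sub_distrib, sum_indicator A, Finset.sum_const, Finset.card_univ,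
            nsmul_eq_mul]
      _ = 0 := by
          rw [hadef]
          push_cast
          rw [mul_div_cancel₀ _ hnne, sub_self]
  have hAn : a ≤ (n : ℝ) := by
    rw [hadef, hndef]
    have h1 : A.ncard ≤ (Set.univ : Set G).ncard :=
      Set.ncard_le_ncard (Set.subset_univ A) Set.finite_univ
    rw [Set.ncard_univ, Nat.card_eq_fintype_card] at h1
    exact_mod_cast h1
  have ha0 : 0 ≤ a := by rw [hadef]; positivity
  have hfnorm : ‖f‖ ^ 2 ≤ (n : ℝ) := by
    rw [norm_sq_eq_sum']
    have hb1 : ∀ x : G, ‖f x‖ ^ 2 ≤ 1 := by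
      intro x
      have h01 : 0 ≤ a / n := by positivity
      have h02 : a / n ≤ 1 := by
        rw [div_le_one (by exact_mod_cast hn0)]
        exact hAn
      by_cases hx : x ∈ A
      · rw [hfx x, Set.indicator_of_mem hx, Pi.one_apply]
        rw [show (1 : ℂ) - ((a / n : ℝ) : ℂ) = (((1 - a / n : ℝ)) : ℂ) by push_cast; ring,
          Complex.norm_real, Real.norm_eq_abs, sq_abs]
        nlinarith
      · rw [hfx x, Set.indicator_of_notMem hx]
        rw [show (0 : ℂ) - ((a / n : ℝ) : ℂ) = (((0 - a / n : ℝ)) : ℂ) by push_cast; ring,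
          Complex.norm_real, Real.norm_eq_abs, sq_abs]
        nlinarith
    calc ∑ x, ‖f x‖ ^ 2 ≤ ∑ _x : G, (1 : ℝ) := Finset.sum_le_sum fun x _ => hb1 x
      _ = n := by simp [hndef]
  have hconvf : ∀ x : G, convR B f x = convR B (ind A) x - ((a * b / n : ℝ) : ℂ) := by
    intro x
    have h1 : convR B f = convR B (ind A) - ((a / n : ℝ) : ℂ) • ((B.ncard : ℂ) • onesVec) := by
      rw [hfdef, map_sub, map_smul, convR_onesVec]
    have h2 := congrFun (congrArg WithLp.ofLp h1) x
    rw [h2]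
    show convR B (ind A) x - ((a / n : ℝ) : ℂ) • ((B.ncard : ℂ) • onesVec) x = _
    have h3 : (((B.ncard : ℂ) • onesVec : EuclideanSpace ℂ G)) x = (B.ncard : ℂ) := by
      simp [onesVec]
    rw [h3, smul_eq_mul, hbdef]
    push_cast
    ring
  have hlow : ((n : ℝ) - (A * B).ncard) * ((a * b / n)) ^ 2 ≤ ‖convR B f‖ ^ 2 := by
    rw [norm_sq_eq_sum']
    set T : Finset G := Set.Finite.toFinset (Set.toFinite (A * B)) with hT
    have hTc : ∀ x ∈ Tᶜ, ‖convR B f x‖ ^ 2 = (a * b / n) ^ 2 := by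
      intro x hx
      have hxnot : x ∉ A * B := by
        have := Finset.mem_compl.mp hx
        rwa [hT, Set.Finite.mem_toFinset] at this
      rw [hconvf x, convR_ind_zero A B x hxnot, zero_sub, norm_neg, Complex.norm_real,
        Real.norm_eq_abs, sq_abs]
    have hsub : ∑ x ∈ Tᶜ, ‖convR B f x‖ ^ 2 ≤ ∑ x, ‖convR B f x‖ ^ 2 :=
      Finset.sum_le_sum_of_subset_of_nonneg (Finset.subset_univ _)
        (fun x _ _ => by positivity)
    have hcard : (Tᶜ.card : ℝ) = (n : ℝ) - (A * B).ncard := by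
      have h1 : Tᶜ.card = Fintype.card G - T.card := Finset.card_compl T
      have hle2 : T.card ≤ Fintype.card G := Finset.card_le_univ T
      have hTcard : (A * B).ncard = T.card := Set.ncard_eq_toFinset_card (A * B)
      rw [h1, Nat.cast_sub hle2, hTcard, hndef]
    calc ((n : ℝ) - (A * B).ncard) * (a * b / n) ^ 2
        = ∑ _x ∈ Tᶜ, (a * b / n) ^ 2 := by
          rw [Finset.sum_const, nsmul_eq_mul, hcard]
      _ = ∑ x ∈ Tᶜ, ‖convR B f x‖ ^ 2 :=
          (Finset.sum_congr rfl fun x hx => (hTc x hx)).symm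
      _ ≤ ∑ x, ‖convR B f x‖ ^ 2 := hsub
  have hup := norm_convR_sq_le hq hd B f hf
  have h2 : ‖convR B f‖ ^ 2 ≤ (n : ℝ) ^ 2 * b / d := by
    calc ‖convR B f‖ ^ 2 ≤ ((n : ℝ) * B.ncard / d) * ‖f‖ ^ 2 := hup
      _ ≤ ((n : ℝ) * B.ncard / d) * n := by
          refine mul_le_mul_of_nonneg_left hfnorm (by positivity)
      _ = (n : ℝ) ^ 2 * b / d := by rw [hbdef]; ring
  calc ((n : ℝ) - (A * B).ncard) * ((a * b / n)) ^ 2 ≤ ‖convR B f‖ ^ 2 := hlow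
    _ ≤ (n : ℝ) ^ 2 * b / d := h2

end Final

end QR

theorem stmt_10 (c ε : ℝ) (hc : 0 < c) (hε : 0 < ε) :
    ∃ d : ℕ, 0 < d ∧
      ∀ (G : Type) [Group G] [Fintype G],
        IsQuasirandom d G →
        ∀ A B : Set G, c * (Fintype.card G : ℝ) ≤ (A.ncard : ℝ) →
          c * (Fintype.card G : ℝ) ≤ (B.ncard : ℝ) →
          (1 - ε) * (Fintype.card G : ℝ) ≤ ((A * B).ncard : ℝ) := by
  classical
  refine ⟨⌈(ε * c ^ 3)⁻¹⌉₊ + 1, Nat.succ_pos _, ?_⟩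
  intro G _ _ hq A B hA hB
  set d : ℕ := ⌈(ε * c ^ 3)⁻¹⌉₊ + 1 with hddef
  have hd0 : 0 < d := Nat.succ_pos _
  have key := main_count hq hd0 A B
  set n : ℕ := Fintype.card G with hndef
  have hn0 : 0 < n := Fintype.card_pos
  have hn1 : (1 : ℝ) ≤ n := by exact_mod_cast hn0
  set a : ℝ := (A.ncard : ℝ) with hadef
  set b : ℝ := (B.ncard : ℝ) with hbdef
  set m : ℝ := ((A * B).ncard : ℝ) with hmdef
  have hcn : (0 : ℝ) < c * n := by positivity
  have ha : c * n ≤ a := hA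
  have hb : c * n ≤ b := hB
  have ha0 : 0 < a := lt_of_lt_of_le hcn ha
  have hb0 : 0 < b := lt_of_lt_of_le hcn hb
  have hmn : m ≤ (n : ℝ) := by
    rw [hmdef, hndef]
    have h1 : (A * B).ncard ≤ (Set.univ : Set G).ncard :=
      Set.ncard_le_ncard (Set.subset_univ _) Set.finite_univ
    rw [Set.ncard_univ, Nat.card_eq_fintype_card] at h1
    exact_mod_cast h1
  have hnm : 0 ≤ (n : ℝ) - m := by linarith
  have hd1 : (ε * c ^ 3)⁻¹ < (d : ℝ) := by
    calc (ε * c ^ 3)⁻¹ ≤ (⌈(ε * c ^ 3)⁻¹⌉₊ : ℝ) := Nat.le_ceil _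
      _ < d := by rw [hddef]; exact_mod_cast Nat.lt_succ_self _
  have e6 : 1 < ε * c ^ 3 * (d : ℝ) := by
    have hpos : (0 : ℝ) < ε * c ^ 3 := by positivity
    have h1 : (ε * c ^ 3) * (ε * c ^ 3)⁻¹ < (ε * c ^ 3) * d :=
      mul_lt_mul_of_pos_left hd1 hpos
    rw [mul_inv_cancel₀ hpos.ne'] at h1
    linarith
  -- key : (n - m) * (a*b/n)^2 ≤ n^2 * b / d
  have hd0' : (0 : ℝ) < d := by exact_mod_cast hd0
  have hnn0 : (0 : ℝ) < n := by exact_mod_cast hn0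
  have e1 : ((n : ℝ) - m) * (a * b) ^ 2 / (n : ℝ) ^ 2 ≤ (n : ℝ) ^ 2 * b / d := by
    calc ((n : ℝ) - m) * (a * b) ^ 2 / (n : ℝ) ^ 2
        = ((n : ℝ) - m) * (a * b / n) ^ 2 := by field_simp
      _ ≤ (n : ℝ) ^ 2 * b / d := key
  have e2 : ((n : ℝ) - m) * (a * b) ^ 2 * d ≤ (n : ℝ) ^ 2 * b * (n : ℝ) ^ 2 := by
    rw [div_le_div_iff₀ (by positivity) hd0'] at e1
    linarith
  have e2' : ((n : ℝ) - m) * a ^ 2 * b * d ≤ (n : ℝ) ^ 4 := by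
    have h' : (((n : ℝ) - m) * a ^ 2 * b * d) * b ≤ ((n : ℝ) ^ 4) * b := by
      calc (((n : ℝ) - m) * a ^ 2 * b * d) * b = ((n : ℝ) - m) * (a * b) ^ 2 * d := by ring
        _ ≤ (n : ℝ) ^ 2 * b * (n : ℝ) ^ 2 := e2
        _ = ((n : ℝ) ^ 4) * b := by ring
    exact le_of_mul_le_mul_right h' hb0
  have e3 : c ^ 3 * (n : ℝ) ^ 3 ≤ a ^ 2 * b := by
    have ha2 : (c * n) ^ 2 ≤ a ^ 2 := by nlinarith
    calc c ^ 3 * (n : ℝ) ^ 3 = (c * n) ^ 2 * (c * n) := by ring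
      _ ≤ a ^ 2 * b := by nlinarith
  have e4 : ((n : ℝ) - m) * (c ^ 3 * (n : ℝ) ^ 3) * d ≤ (n : ℝ) ^ 4 := by
    have hnd : 0 ≤ ((n : ℝ) - m) * d := by positivity
    calc ((n : ℝ) - m) * (c ^ 3 * (n : ℝ) ^ 3) * d
        = (((n : ℝ) - m) * d) * (c ^ 3 * (n : ℝ) ^ 3) := by ring
      _ ≤ (((n : ℝ) - m) * d) * (a ^ 2 * b) := mul_le_mul_of_nonneg_left e3 hnd
      _ = ((n : ℝ) - m) * a ^ 2 * b * d := by ring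
      _ ≤ (n : ℝ) ^ 4 := e2'
  have e5 : ((n : ℝ) - m) * (c ^ 3 * d) ≤ (n : ℝ) := by
    have hn3 : (0 : ℝ) < (n : ℝ) ^ 3 := by positivity
    have h' : (((n : ℝ) - m) * (c ^ 3 * d)) * (n : ℝ) ^ 3 ≤ (n : ℝ) * (n : ℝ) ^ 3 := by
      calc (((n : ℝ) - m) * (c ^ 3 * d)) * (n : ℝ) ^ 3
          = ((n : ℝ) - m) * (c ^ 3 * (n : ℝ) ^ 3) * d := by ring
        _ ≤ (n : ℝ) ^ 4 := e4
        _ = (n : ℝ) * (n : ℝ) ^ 3 := by ring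
    exact le_of_mul_le_mul_right h' hn3
  have e7 : ((n : ℝ) - m) * 1 ≤ ((n : ℝ) - m) * (ε * c ^ 3 * d) :=
    mul_le_mul_of_nonneg_left e6.le hnm
  have e8 : ((n : ℝ) - m) * (ε * c ^ 3 * d) = ε * (((n : ℝ) - m) * (c ^ 3 * d)) := by ring
  have e9 : ε * (((n : ℝ) - m) * (c ^ 3 * d)) ≤ ε * n := mul_le_mul_of_nonneg_left e5 hε.le
  linarith
end
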